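/- arXiv:1508.04887 — 6 statements merged into one kernel-verified Lean document; each statement's English description precedes it below -/
import Mathlib

section
/- For Y_1,...,Y_n i.i.d. uniform on [0,1]^d, the expected number of Pareto-optimal points satisfies E(K_n) = n ∫_0^1 (1-x)^{n-1} (-log x)^{d-1}/(d-1)! dx. -/
open MeasureTheory Filter Set Real


lemma exp_neg_image : (fun t : ℝ => Real.exp (-t)) '' Set.Ioi 0 = Set.Ioo 0 1 := by
  ext y
  constructor
  · rintro ⟨t, ht, rfl⟩
    refine ⟨Real.exp_pos _, ?_⟩
    rw [Real.exp_lt_one_iff]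
    simpa using (Set.mem_Ioi.mp ht)
  · rintro ⟨h0, h1⟩
    exact ⟨-Real.log y, by simpa using Real.log_neg h0 h1, by simp [Real.exp_log h0]⟩

lemma exp_neg_deriv (t : ℝ) : HasDerivWithinAt (fun t : ℝ => Real.exp (-t)) (-Real.exp (-t)) (Set.Ioi 0) t := by
  have : HasDerivAt (fun t : ℝ => Real.exp (-t)) (Real.exp (-t) * (-1)) t :=
    (Real.hasDerivAt_exp (-t)).comp t (hasDerivAt_neg t)
  simpa using this.hasDerivWithinAt

lemma exp_neg_inj : Set.InjOn (fun t : ℝ => Real.exp (-t)) (Set.Ioi 0) :=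
  fun a _ b _ h => neg_injective (Real.exp_injective h)

lemma gamma_side (p k : ℕ) :
    ∫ t in Set.Ioi (0:ℝ), t ^ p * Real.exp (-((k+1) * t)) =
      (p.factorial : ℝ) / (k+1) ^ (p+1) := by
  have h := Real.integral_rpow_mul_exp_neg_mul_Ioi
    (a := (p:ℝ)+1) (r := (k:ℝ)+1) (by positivity) (by positivity)
  rw [show ((p:ℝ)+1)-1 = (p:ℝ) by ring] at h
  have heq : ∫ t in Set.Ioi (0:ℝ), t ^ p * Real.exp (-((k+1) * t)) =
      ∫ t in Set.Ioi (0:ℝ), t ^ ((p:ℝ)) * Real.exp (-(((k:ℝ)+1) * t)) := by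
    refine setIntegral_congr_fun measurableSet_Ioi (fun t ht => ?_)
    rw [Real.rpow_natCast]
  rw [heq, h, show ((p:ℝ)+1) = ((p+1 : ℕ):ℝ) by push_cast; ring, Real.rpow_natCast]
  rw [show ((p+1:ℕ):ℝ) = (p:ℝ)+1 by push_cast; ring, Real.Gamma_nat_eq_factorial,
    div_pow, one_pow, div_mul_eq_mul_div, one_mul]

lemma gamma_side_int (p k : ℕ) :
    IntegrableOn (fun t : ℝ => t ^ p * Real.exp (-((k+1) * t))) (Set.Ioi 0) := by
  have h := integrableOn_rpow_mul_exp_neg_mul_rpow (p := 1) (s := (p:ℝ)) (b := (k:ℝ)+1)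
    (lt_of_lt_of_le neg_one_lt_zero (Nat.cast_nonneg p)) zero_lt_one (by positivity)
  refine h.congr_fun (fun t ht => ?_) measurableSet_Ioi
  beta_reduce
  rw [Real.rpow_natCast, Real.rpow_one]
  push_cast; ring_nf


lemma absderiv_eq (p k : ℕ) : ∀ t ∈ Set.Ioi (0:ℝ),
    (fun t : ℝ => t ^ p * Real.exp (-((k+1) * t))) t =
    (fun t : ℝ => |(-Real.exp (-t))| • ((Real.exp (-t)) ^ k * (-Real.log (Real.exp (-t))) ^ p)) t := by
  intro t _
  simp only [abs_neg, abs_of_pos (Real.exp_pos _), Real.log_exp, smul_eq_mul, neg_neg]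
  rw [← Real.exp_nat_mul, show -(((k:ℝ)+1)*t) = (k:ℝ)*-t + -t by ring, Real.exp_add]
  ring

lemma key1d_int (p k : ℕ) :
    IntegrableOn (fun x : ℝ => x ^ k * (-Real.log x) ^ p) (Set.Ioo 0 1) := by
  rw [← exp_neg_image,
    integrableOn_image_iff_integrableOn_abs_deriv_smul measurableSet_Ioi
      (fun t _ => exp_neg_deriv t) exp_neg_inj]
  exact ((gamma_side_int p k).congr_fun (absderiv_eq p k) measurableSet_Ioi)

lemma key1d_val (p k : ℕ) :
    ∫ x in Set.Ioo (0:ℝ) 1, x ^ k * (-Real.log x) ^ p =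
      (p.factorial : ℝ) / (k+1) ^ (p+1) := by
  rw [← exp_neg_image,
    integral_image_eq_integral_abs_deriv_smul measurableSet_Ioi
      (fun t _ => exp_neg_deriv t) exp_neg_inj]
  rw [← gamma_side p k]
  exact (setIntegral_congr_fun measurableSet_Ioi (fun t ht => (absderiv_eq p k t ht).symm))


lemma one_sub_pow_expand (t : ℝ) (m : ℕ) :
    (1 - t) ^ m = ∑ k ∈ Finset.range (m+1), (-1)^k * (m.choose k : ℝ) * t^k := by
  rw [show (1:ℝ) - t = -t + 1 by ring, add_pow]
  refine Finset.sum_congr rfl fun k _ => ?_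
  rw [neg_pow]
  ring

lemma restrict_icc_eq_pi (d : ℕ) :
    (volume : Measure (Fin d → ℝ)).restrict (Set.Icc 0 1) =
      Measure.pi (fun _ : Fin d => (volume : Measure ℝ).restrict (Set.Icc 0 1)) := by
  refine (Measure.pi_eq fun s hs => ?_).symm
  rw [Measure.restrict_apply (MeasurableSet.univ_pi hs),
    show (Set.Icc (0 : Fin d → ℝ) 1) = Set.pi Set.univ (fun i => Set.Icc (0:ℝ) 1) by
      rw [Set.pi_univ_Icc]; rfl,
    ← Set.pi_inter_distrib, volume_pi_pi]
  exact Finset.prod_congr rfl fun i _ => (Measure.restrict_apply (hs i)).symm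

instance : IsProbabilityMeasure ((volume : Measure ℝ).restrict (Set.Icc 0 1)) := by
  constructor
  rw [Measure.restrict_apply_univ, Real.volume_Icc]
  norm_num

instance (d : ℕ) : IsProbabilityMeasure ((volume : Measure (Fin d → ℝ)).restrict (Set.Icc 0 1)) := by
  rw [restrict_icc_eq_pi]
  infer_instance

lemma integral_pow_icc (j : ℕ) : ∫ x in Set.Icc (0:ℝ) 1, x ^ j = ((j:ℝ)+1)⁻¹ := by
  rw [integral_Icc_eq_integral_Ioc, ← intervalIntegral.integral_of_le zero_le_one,
    integral_pow]
  rw [one_pow, zero_pow (Nat.succ_ne_zero j)]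
  push_cast; ring

lemma integral_prod_pow (d j : ℕ) :
    ∫ x in Set.Icc (0:Fin d → ℝ) 1, (∏ k, x k ^ j) = (((j:ℝ)+1)⁻¹)^d := by
  rw [← integral_indicator (measurableSet_Icc)]
  have : ∀ x : Fin d → ℝ, (Set.Icc (0:Fin d → ℝ) 1).indicator (fun x => ∏ k, x k ^ j) x
      = ∏ k, (Set.Icc (0:ℝ) 1).indicator (fun t => t ^ j) (x k) := by
    intro x
    by_cases hx : x ∈ Set.Icc (0:Fin d → ℝ) 1
    · rw [Set.indicator_of_mem hx]
      refine (Finset.prod_congr rfl fun k _ => ?_)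
      exact (Set.indicator_of_mem (Set.mem_Icc.mpr ⟨hx.1 k, hx.2 k⟩) _).symm
    · rw [Set.indicator_of_notMem hx]
      have : ∃ k, x k ∉ Set.Icc (0:ℝ) 1 := by
        by_contra h
        push_neg at h
        exact hx (Set.mem_Icc.mpr ⟨fun k => (Set.mem_Icc.mp (h k)).1, fun k => (Set.mem_Icc.mp (h k)).2⟩)
      obtain ⟨k, hk⟩ := this
      exact (Finset.prod_eq_zero (Finset.mem_univ k) (Set.indicator_of_notMem hk _)).symm
  simp_rw [this]
  rw [volume_pi]
  rw [MeasureTheory.integral_fintype_prod_eq_pow (ι := Fin d) ((Set.Icc (0:ℝ) 1).indicator (fun t => t ^ j)),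
    integral_indicator measurableSet_Icc, integral_pow_icc]
  simp


-- the "dominated region" complement section set
lemma sect_measure (d m : ℕ) (hd : 1 ≤ d) (x : Fin d → ℝ) (hx : x ∈ Set.Icc (0:Fin d → ℝ) 1) :
    (Measure.pi (fun _ : Fin m => (volume : Measure (Fin d → ℝ)).restrict (Set.Icc 0 1)))
      {y : Fin m → Fin d → ℝ | ∀ j, ¬((∀ k, y j k ≤ x k) ∧ y j ≠ x)}
    = ENNReal.ofReal ((1 - ∏ k, x k) ^ m) := by
  set ν := (volume : Measure (Fin d → ℝ)).restrict (Set.Icc 0 1) with hν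
  haveI : IsProbabilityMeasure ν := by
    constructor
    rw [hν, Measure.restrict_apply_univ, show (Set.Icc (0:Fin d → ℝ) 1) = Set.pi Set.univ (fun i => Set.Icc (0:ℝ) 1) by rw [Set.pi_univ_Icc]; rfl, volume_pi_pi]
    simp [Real.volume_Icc]
  have hsing : ν {x} = 0 := by
    refine le_antisymm (le_trans (Measure.restrict_le_self _) (le_of_eq ?_)) zero_le
    have : ({x} : Set (Fin d → ℝ)) = Set.Icc x x := by simp
    rw [this, Real.volume_Icc_pi]
    exact Finset.prod_eq_zero (Finset.mem_univ (⟨0, hd⟩ : Fin d)) (by simp)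
  have hC : {y : Fin m → Fin d → ℝ | ∀ j, ¬((∀ k, y j k ≤ x k) ∧ y j ≠ x)}
      = Set.pi Set.univ (fun _ : Fin m => (Set.Iic x \ {x})ᶜ) := by
    ext y
    simp only [Set.mem_setOf_eq, Set.mem_pi, Set.mem_univ, forall_true_left,
      Set.mem_compl_iff, Set.mem_diff, Set.mem_Iic, Set.mem_singleton_iff]
    refine forall_congr' fun j => ?_
    rw [Pi.le_def]
  rw [hC, Measure.pi_pi]
  have hIic : ν (Set.Iic x \ {x}) = ENNReal.ofReal (∏ k, x k) := by
    rw [measure_diff_null hsing, hν, Measure.restrict_apply measurableSet_Iic]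
    have : Set.Iic x ∩ Set.Icc 0 1 = Set.Icc 0 x := by
      ext y
      simp only [Set.mem_inter_iff, Set.mem_Iic, Set.mem_Icc]
      constructor
      · rintro ⟨h1, h2, _⟩; exact ⟨h2, h1⟩
      · rintro ⟨h1, h2⟩; exact ⟨h2, h1, le_trans h2 hx.2⟩
    rw [this, Real.volume_Icc_pi]
    simp only [Pi.zero_apply, sub_zero]
    rw [← ENNReal.ofReal_prod_of_nonneg (fun k _ => hx.1 k)]
  have hcompl : ν (Set.Iic x \ {x})ᶜ = ENNReal.ofReal (1 - ∏ k, x k) := by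
    rw [measure_compl (measurableSet_Iic.diff (measurableSet_singleton x)) (measure_ne_top _ _),
      hIic]
    have h1 : ν Set.univ = 1 := measure_univ
    rw [h1, ← ENNReal.ofReal_one, ← ENNReal.ofReal_sub _ (Finset.prod_nonneg (fun k _ => hx.1 k))]
  rw [hcompl, Finset.prod_const, Finset.card_univ, Fintype.card_fin,
    ← ENNReal.ofReal_pow (by
      have : (∏ k, x k) ≤ 1 := Finset.prod_le_one (fun k _ => hx.1 k) (fun k _ => hx.2 k)
      linarith)]

lemma prob_opt (d m : ℕ) (hd : 1 ≤ d) (i : Fin (m+1)) :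
    (Measure.pi (fun _ : Fin (m+1) => (volume : Measure (Fin d → ℝ)).restrict (Set.Icc 0 1)))
      {ω : Fin (m+1) → Fin d → ℝ | ¬ ∃ j, j ≠ i ∧ (∀ k, ω j k ≤ ω i k) ∧ ω j ≠ ω i}
    = ENNReal.ofReal (∫ x in Set.Icc (0:Fin d → ℝ) 1, (1 - ∏ k, x k) ^ m) := by
  set ν := (volume : Measure (Fin d → ℝ)).restrict (Set.Icc 0 1) with hν
  haveI : IsProbabilityMeasure ν := by
    constructor
    rw [hν, Measure.restrict_apply_univ, show (Set.Icc (0:Fin d → ℝ) 1) = Set.pi Set.univ (fun i => Set.Icc (0:ℝ) 1) by rw [Set.pi_univ_Icc]; rfl, volume_pi_pi]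
    simp [Real.volume_Icc]
  set S : Set ((Fin d → ℝ) × (Fin m → Fin d → ℝ)) :=
    {q | ∀ j, ¬((∀ k, q.2 j k ≤ q.1 k) ∧ q.2 j ≠ q.1)} with hS
  have hSm : MeasurableSet S := by
    have hrw : S = ⋂ j, ((⋂ k, {q : (Fin d → ℝ) × (Fin m → Fin d → ℝ) | q.2 j k ≤ q.1 k})
        ∩ {q : (Fin d → ℝ) × (Fin m → Fin d → ℝ) | q.2 j = q.1}ᶜ)ᶜ := by
      ext q
      simp only [hS, Set.mem_setOf_eq, Set.mem_iInter, Set.mem_compl_iff, Set.mem_inter_iff,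
        not_and, Set.mem_setOf_eq]
    rw [hrw]
    refine MeasurableSet.iInter fun j => (MeasurableSet.inter ?_ ?_).compl
    · exact MeasurableSet.iInter fun k => measurableSet_le
        (f := fun q : (Fin d → ℝ) × (Fin m → Fin d → ℝ) => q.2 j k)
        (g := fun q : (Fin d → ℝ) × (Fin m → Fin d → ℝ) => q.1 k)
        (by fun_prop) (by fun_prop)
    · exact (measurableSet_eq_fun
        (f := fun q : (Fin d → ℝ) × (Fin m → Fin d → ℝ) => q.2 j)
        (g := fun q : (Fin d → ℝ) × (Fin m → Fin d → ℝ) => q.1)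
        (by fun_prop) (by fun_prop)).compl
  have hpre : {ω : Fin (m+1) → Fin d → ℝ | ¬ ∃ j, j ≠ i ∧ (∀ k, ω j k ≤ ω i k) ∧ ω j ≠ ω i}
      = (MeasurableEquiv.piFinSuccAbove (fun _ : Fin (m+1) => Fin d → ℝ) i) ⁻¹' S := by
    ext ω
    show (¬ ∃ j, j ≠ i ∧ (∀ k, ω j k ≤ ω i k) ∧ ω j ≠ ω i) ↔
      ∀ j : Fin m, ¬((∀ k, ω (i.succAbove j) k ≤ ω i k) ∧ ω (i.succAbove j) ≠ ω i)
    constructor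
    · intro h j hj
      exact h ⟨i.succAbove j, Fin.succAbove_ne i j, hj⟩
    · rintro h ⟨j, hji, hj⟩
      obtain ⟨j', rfl⟩ := Fin.exists_succAbove_eq hji
      exact h j' hj
  have hmp := measurePreserving_piFinSuccAbove (fun _ : Fin (m+1) => ν) i
  rw [hpre, hmp.measure_preimage hSm.nullMeasurableSet, Measure.prod_apply hSm]
  have hsect : ∀ x ∈ Set.Icc (0:Fin d → ℝ) 1,
      (Measure.pi fun _ : Fin m => ν) (Prod.mk x ⁻¹' S) = ENNReal.ofReal ((1 - ∏ k, x k) ^ m) :=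
    fun x hx => sect_measure d m hd x hx
  have hint : IntegrableOn (fun x : Fin d → ℝ => (1 - ∏ k, x k) ^ m) (Set.Icc 0 1) volume := by
    refine Continuous.integrableOn_Icc ?_
    exact (continuous_const.sub (continuous_finset_prod _ fun k _ => continuous_apply k)).pow m
  have hnn : 0 ≤ᵐ[volume.restrict (Set.Icc (0:Fin d → ℝ) 1)]
      (fun x : Fin d → ℝ => (1 - ∏ k, x k) ^ m) := by
    refine (ae_restrict_iff' measurableSet_Icc).2 (ae_of_all _ fun x hx => ?_)
    have : (∏ k, x k) ≤ 1 := Finset.prod_le_one (fun k _ => hx.1 k) (fun k _ => hx.2 k)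
    exact pow_nonneg (by linarith) m
  rw [show (∫⁻ x, (Measure.pi fun _ : Fin m => ν) (Prod.mk x ⁻¹' S) ∂ν)
      = ∫⁻ x in Set.Icc (0:Fin d → ℝ) 1, ENNReal.ofReal ((1 - ∏ k, x k) ^ m) ∂volume from
    setLIntegral_congr_fun measurableSet_Icc hsect,
    ← ofReal_integral_eq_lintegral_ofReal hint hnn]






lemma lhs_expand (d m : ℕ) :
    ∫ x in Set.Icc (0:Fin d → ℝ) 1, (1 - ∏ k, x k) ^ m =
      ∑ j ∈ Finset.range (m+1), (-1:ℝ)^j * (m.choose j) * (((j:ℝ)+1)⁻¹)^d := by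
  have h1 : ∀ x : Fin d → ℝ, (1 - ∏ k, x k) ^ m
      = ∑ j ∈ Finset.range (m+1), (-1:ℝ)^j * (m.choose j) * ∏ k, x k ^ j := by
    intro x
    rw [one_sub_pow_expand]
    exact Finset.sum_congr rfl fun j _ => by rw [Finset.prod_pow]
  simp_rw [h1]
  rw [integral_finset_sum]
  · exact Finset.sum_congr rfl fun j _ => by
      rw [integral_const_mul, integral_prod_pow]
  · intro j _
    refine Integrable.const_mul ?_ _
    exact Continuous.integrableOn_Icc (continuous_finset_prod _ fun k _ => (continuous_apply k).pow j)

lemma rhs_expand (p m : ℕ) :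
    ∫ x in Set.Ioo (0:ℝ) 1, (1 - x) ^ m * (-Real.log x) ^ p =
      ∑ j ∈ Finset.range (m+1), (-1:ℝ)^j * (m.choose j) * ((p.factorial : ℝ) / (j+1)^(p+1)) := by
  have h1 : ∀ x : ℝ, (1 - x) ^ m * (-Real.log x) ^ p
      = ∑ j ∈ Finset.range (m+1), (-1:ℝ)^j * (m.choose j) * (x ^ j * (-Real.log x)^p) := by
    intro x
    rw [one_sub_pow_expand, Finset.sum_mul]
    exact Finset.sum_congr rfl fun j _ => by ring
  simp_rw [h1]
  rw [integral_finset_sum]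
  · exact Finset.sum_congr rfl fun j _ => by rw [integral_const_mul, key1d_val]
  · intro j _
    exact (key1d_int p j).const_mul _






/-- For i.i.d. uniform points on `[0,1]^d`, the expected number of Pareto-optimal
points equals `n ∫_0^1 (1-x)^{n-1} (-log x)^{d-1}/(d-1)! dx`. -/
theorem stmt1 (d n : ℕ) (hd : 1 ≤ d) (hn : 1 ≤ n)
    (μ : Measure (Fin n → Fin d → ℝ))
    (hμ : μ = Measure.pi (fun _ => volume.restrict (Set.Icc (0 : Fin d → ℝ) 1)))
    (K : (Fin n → Fin d → ℝ) → ℕ)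
    (hK : ∀ ω, K ω = (Finset.univ.filter (fun i : Fin n =>
      ¬ ∃ j : Fin n, j ≠ i ∧ (∀ k, ω j k ≤ ω i k) ∧ ω j ≠ ω i)).card) :
    ∫ ω, (K ω : ℝ) ∂μ =
      n * ∫ x in (0:ℝ)..1, (1 - x) ^ (n - 1) * (-Real.log x) ^ (d - 1) /
        (d - 1).factorial := by
  obtain ⟨m, rfl⟩ : ∃ m, n = m + 1 := ⟨n - 1, (Nat.succ_pred_eq_of_pos hn).symm⟩
  obtain ⟨p, rfl⟩ : ∃ p, d = p + 1 := ⟨d - 1, (Nat.succ_pred_eq_of_pos hd).symm⟩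
  subst hμ
  haveI : IsProbabilityMeasure (Measure.pi (fun _ : Fin (m+1) =>
      (volume : Measure (Fin (p+1) → ℝ)).restrict (Set.Icc 0 1))) := by infer_instance
  set μ := Measure.pi (fun _ : Fin (m+1) =>
      (volume : Measure (Fin (p+1) → ℝ)).restrict (Set.Icc 0 1)) with hμdef
  set A : Fin (m+1) → Set (Fin (m+1) → Fin (p+1) → ℝ) := fun i =>
    {ω | ¬ ∃ j, j ≠ i ∧ (∀ k, ω j k ≤ ω i k) ∧ ω j ≠ ω i} with hA
  have hAm : ∀ i, MeasurableSet (A i) := by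
    intro i
    have : A i = ⋂ j, ⋂ (_ : j ≠ i),
        ((⋂ k, {ω : Fin (m+1) → Fin (p+1) → ℝ | ω j k ≤ ω i k})
          ∩ {ω : Fin (m+1) → Fin (p+1) → ℝ | ω j = ω i}ᶜ)ᶜ := by
      ext ω
      simp only [hA, Set.mem_setOf_eq, Set.mem_iInter, Set.mem_compl_iff, Set.mem_inter_iff,
        not_and, not_exists]
    rw [this]
    exact MeasurableSet.iInter fun j => MeasurableSet.iInter fun _ =>
      ((MeasurableSet.iInter fun k => measurableSet_le
          (f := fun ω : Fin (m+1) → Fin (p+1) → ℝ => ω j k)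
          (g := fun ω : Fin (m+1) → Fin (p+1) → ℝ => ω i k) (by fun_prop) (by fun_prop)).inter
        (measurableSet_eq_fun
          (f := fun ω : Fin (m+1) → Fin (p+1) → ℝ => ω j)
          (g := fun ω : Fin (m+1) → Fin (p+1) → ℝ => ω i) (by fun_prop) (by fun_prop)).compl).compl
  have hKcast : ∀ ω, (K ω : ℝ) = ∑ i : Fin (m+1), (A i).indicator (fun _ => (1:ℝ)) ω := by
    intro ω
    rw [hK, Finset.card_filter]
    push_cast
    refine Finset.sum_congr rfl fun i _ => ?_
    by_cases h : ω ∈ A i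
    · rw [Set.indicator_of_mem h]
      exact if_pos h
    · rw [Set.indicator_of_notMem h]
      exact if_neg h
  simp_rw [hKcast]
  rw [integral_finset_sum _ (fun i _ => (integrable_const (1:ℝ)).indicator (hAm i))]
  have hIeq : ∀ i : Fin (m+1), ∫ ω, (A i).indicator (fun _ => (1:ℝ)) ω ∂μ
      = ∫ x in Set.Icc (0:Fin (p+1) → ℝ) 1, (1 - ∏ k, x k) ^ m := by
    intro i
    rw [integral_indicator_const (1:ℝ) (hAm i), smul_eq_mul, mul_one, measureReal_def, hμdef, prob_opt (p+1) m hd i,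
      ENNReal.toReal_ofReal]
    refine setIntegral_nonneg measurableSet_Icc fun x hx => pow_nonneg ?_ m
    have : (∏ k, x k) ≤ 1 := Finset.prod_le_one (fun k _ => hx.1 k) (fun k _ => hx.2 k)
    linarith
  simp_rw [hIeq]
  rw [Finset.sum_const, Finset.card_univ, Fintype.card_fin, nsmul_eq_mul, lhs_expand]
  -- RHS
  rw [intervalIntegral.integral_of_le zero_le_one, integral_Ioc_eq_integral_Ioo]
  simp only [Nat.add_sub_cancel]
  have : ∀ x : ℝ, (1 - x) ^ m * (-Real.log x) ^ p / (p.factorial : ℝ)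
      = ((1 - x) ^ m * (-Real.log x) ^ p) / (p.factorial : ℝ) := fun x => rfl
  rw [show (∫ x in Set.Ioo (0:ℝ) 1, (1 - x) ^ m * (-Real.log x) ^ p / (p.factorial : ℝ))
      = (∫ x in Set.Ioo (0:ℝ) 1, (1 - x) ^ m * (-Real.log x) ^ p) / (p.factorial : ℝ) from
    integral_div _ _, rhs_expand]
  rw [Finset.sum_div]
  push_cast
  congr 1
  refine Finset.sum_congr rfl fun j _ => ?_
  have h1 : ((p.factorial : ℝ)) ≠ 0 := Nat.cast_ne_zero.mpr (Nat.factorial_ne_zero p)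
  have h2 : ((j:ℝ)+1) ≠ 0 := by positivity
  field_simp
  have h3 : (1 + (j:ℝ)) ≠ 0 := by positivity
  have h4 : (1+(j:ℝ))⁻¹^p*(1+j)^p = 1 := by rw [inv_pow, inv_mul_cancel₀ (pow_ne_zero p h3)]
  ring_nf
  have h5 : (1+(j:ℝ))⁻¹*(1+j) = 1 := inv_mul_cancel₀ h3
  linear_combination (↑(m.choose j) : ℝ) * (1+(j:ℝ))⁻¹ * (1+j) * h4 + (↑(m.choose j) : ℝ) * h5
end

section
/- Let 0 < δ ≤ 1 and 0 < a ≤ δ^{-d}. Then as n → ∞, n ∫_{[0,δ]^d} (1 - a x_1⋯x_d)^{n-1} dx = (1/a) · (log n)^{d-1}/(d-1)! + O((log n)^{d-2}). -/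
open MeasureTheory Filter Asymptotics

open Finset

noncomputable def Sb (b : ℝ) (m n : ℕ) : ℝ :=
  ∑ j ∈ Finset.range n, (n.choose (j+1) : ℝ) * (-1)^j * b^(j+1) / ((j+1 : ℕ) : ℝ)^m

lemma Sb_zero (b : ℝ) (n : ℕ) : Sb b 0 n = 1 - (1-b)^n := by
  have h : (1 - b)^n = ∑ k ∈ Finset.range (n+1), (n.choose k : ℝ) * (-b)^k := by
    rw [sub_eq_add_neg]
    rw [add_comm]
    rw [add_pow]
    simp [mul_comm]
  rw [h, Finset.sum_range_succ']
  simp [Sb]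
  rw [← Finset.sum_neg_distrib]
  apply Finset.sum_congr rfl
  intro j hj
  rw [neg_pow b]
  ring

lemma Sb_rec_step (b : ℝ) (m n : ℕ) :
    Sb b (m+1) (n+1) = Sb b (m+1) n + Sb b m (n+1) / (n+1) := by
  have hA : Sb b m (n+1) / (n+1)
      = ∑ j ∈ Finset.range (n+1), (n.choose j : ℝ) * (-1)^j * b^(j+1) / ((j+1:ℕ):ℝ)^(m+1) := by
    rw [Sb, Finset.sum_div]
    apply Finset.sum_congr rfl
    intro j hj
    have key : ((n+1) : ℝ) * (n.choose j : ℝ) = ((n+1).choose (j+1) : ℝ) * ((j+1:ℕ):ℝ) := by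
      exact_mod_cast congrArg (Nat.cast : ℕ → ℝ) (Nat.add_one_mul_choose_eq n j)
    have hj1 : ((j+1:ℕ):ℝ) ≠ 0 := by positivity
    have hn1 : ((n+1):ℝ) ≠ 0 := by positivity
    rw [div_div, div_eq_div_iff (by positivity) (by positivity)]
    push_cast at key ⊢
    linear_combination (-((-1:ℝ)^j * b^(j+1) * ((j:ℝ)+1)^m)) * key
  have hB : Sb b (m+1) n
      = ∑ j ∈ Finset.range (n+1), (n.choose (j+1) : ℝ) * (-1)^j * b^(j+1) / ((j+1:ℕ):ℝ)^(m+1) := by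
    rw [Finset.sum_range_succ, Nat.choose_succ_self]
    simp [Sb]
  rw [hA, hB, ← Finset.sum_add_distrib, Sb]
  apply Finset.sum_congr rfl
  intro j hj
  rw [Nat.choose_succ_succ]
  push_cast
  ring

lemma Sb_rec (b : ℝ) (m n : ℕ) :
    Sb b (m+1) n = ∑ k ∈ Finset.range n, Sb b m (k+1) / ((k+1:ℕ):ℝ) := by
  induction n with
  | zero => simp [Sb]
  | succ n ih =>
      rw [Sb_rec_step, ih, Finset.sum_range_succ]
      push_cast
      ring

-- gap bounds for log
lemma log_gap_upper (k : ℕ) (hk : 1 ≤ k) :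
    Real.log (k+1) - Real.log k ≤ 1/(k:ℝ) := by
  have hk0 : (0:ℝ) < k := by exact_mod_cast hk
  have h : Real.log ((k+1)/(k:ℝ)) ≤ (k+1)/(k:ℝ) - 1 :=
    Real.log_le_sub_one_of_pos (by positivity)
  rw [Real.log_div (by positivity) (by positivity)] at h
  have : ((k:ℝ)+1)/(k:ℝ) - 1 = 1/(k:ℝ) := by field_simp; ring
  push_cast at h ⊢
  linarith [h, this]

lemma log_gap_lower (k : ℕ) (hk : 1 ≤ k) :
    1/((k:ℝ)+1) ≤ Real.log (k+1) - Real.log k := by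
  have hk0 : (0:ℝ) < k := by exact_mod_cast hk
  have h : Real.log ((k:ℝ)/((k:ℝ)+1)) ≤ (k:ℝ)/((k:ℝ)+1) - 1 :=
    Real.log_le_sub_one_of_pos (by positivity)
  rw [Real.log_div (by positivity) (by positivity)] at h
  have : (k:ℝ)/((k:ℝ)+1) - 1 = -(1/((k:ℝ)+1)) := by field_simp; ring
  push_cast at h ⊢
  linarith [h, this]

lemma harmonic_upper : ∀ n : ℕ, 1 ≤ n →
    ∑ k ∈ Finset.range n, (1:ℝ)/(k+1) ≤ 1 + Real.log n := by
  intro n hn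
  induction n with
  | zero => omega
  | succ n ih =>
      rcases Nat.eq_zero_or_pos n with h0 | h1
      · subst h0; simp
      · have := ih h1
        rw [Finset.sum_range_succ]
        have hgap := log_gap_lower n h1
        push_cast
        push_cast at this hgap
        linarith

lemma harmonic_lower' : ∀ n : ℕ,
    Real.log (n+1) ≤ ∑ k ∈ Finset.range n, (1:ℝ)/(k+1) := by
  intro n
  induction n with
  | zero => simp
  | succ n ih =>
      rw [Finset.sum_range_succ]
      have hgap := log_gap_upper (n+1) (by omega)
      push_cast at hgap ⊢
      linarith

lemma harmonic_lower (n : ℕ) (hn : 1 ≤ n) :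
    Real.log n ≤ ∑ k ∈ Finset.range n, (1:ℝ)/(k+1) := by
  have h1 : Real.log n ≤ Real.log (n+1) :=
    Real.log_le_log (by exact_mod_cast hn) (by push_cast; linarith)
  exact h1.trans (harmonic_lower' n)

lemma wgap (m k : ℕ) (hk : 1 ≤ k) :
    (Real.log k)^m/((k:ℝ)+1) ≤ ((Real.log (k+1))^(m+1) - (Real.log k)^(m+1))/(m+1) ∧
    ((Real.log (k+1))^(m+1) - (Real.log k)^(m+1))/(m+1) ≤ (Real.log (k+1))^m/(k:ℝ) := by
  have hk0 : (0:ℝ) < k := by exact_mod_cast hk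
  set A := Real.log k with hAdef
  set B := Real.log (k+1) with hBdef
  have hA : 0 ≤ A := Real.log_nonneg (by exact_mod_cast hk)
  have hAB : A ≤ B := Real.log_le_log hk0 (by linarith)
  have hB : 0 ≤ B := hA.trans hAB
  have hgeom : B^(m+1) - A^(m+1) = (∑ i ∈ Finset.range (m+1), B^i * A^(m-i)) * (B - A) := by
    rw [← geom_sum₂_mul]
    simp
  have hsum_lo : ((m:ℝ)+1) * A^m ≤ ∑ i ∈ Finset.range (m+1), B^i * A^(m-i) := by
    have : ∀ i ∈ Finset.range (m+1), A^m ≤ B^i * A^(m-i) := by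
      intro i hi
      have him : i ≤ m := by simpa [Nat.lt_succ_iff] using hi
      calc A^m = A^i * A^(m-i) := by rw [← pow_add]; congr 1; omega
        _ ≤ B^i * A^(m-i) := by
            apply mul_le_mul_of_nonneg_right (pow_le_pow_left₀ hA hAB i) (pow_nonneg hA _)
    calc ((m:ℝ)+1) * A^m = ∑ _i ∈ Finset.range (m+1), A^m := by
          rw [Finset.sum_const, Finset.card_range]; push_cast; ring
      _ ≤ _ := Finset.sum_le_sum this
  have hsum_hi : ∑ i ∈ Finset.range (m+1), B^i * A^(m-i) ≤ ((m:ℝ)+1) * B^m := by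
    have : ∀ i ∈ Finset.range (m+1), B^i * A^(m-i) ≤ B^m := by
      intro i hi
      have him : i ≤ m := by simpa [Nat.lt_succ_iff] using hi
      calc B^i * A^(m-i) ≤ B^i * B^(m-i) := by
            apply mul_le_mul_of_nonneg_left (pow_le_pow_left₀ hA hAB _) (pow_nonneg hB _)
        _ = B^m := by rw [← pow_add]; congr 1; omega
    calc ∑ i ∈ Finset.range (m+1), B^i * A^(m-i) ≤ ∑ _i ∈ Finset.range (m+1), B^m :=
          Finset.sum_le_sum this
      _ = ((m:ℝ)+1) * B^m := by rw [Finset.sum_const, Finset.card_range]; push_cast; ring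
  have hglo : 1/((k:ℝ)+1) ≤ B - A := by
    have := log_gap_lower k hk; push_cast at this ⊢; linarith
  have hghi : B - A ≤ 1/(k:ℝ) := by
    have := log_gap_upper k hk; push_cast at this ⊢; linarith
  have hsum_nonneg : (0:ℝ) ≤ ∑ i ∈ Finset.range (m+1), B^i * A^(m-i) :=
    Finset.sum_nonneg fun i _ => mul_nonneg (pow_nonneg hB _) (pow_nonneg hA _)
  constructor
  · rw [hgeom, div_le_div_iff₀ (by positivity) (by positivity)]
    calc A^m * ((m:ℝ)+1) = (((m:ℝ)+1) * A^m) * (((k:ℝ)+1) * (1/((k:ℝ)+1))) := by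
          field_simp
      _ ≤ (∑ i ∈ Finset.range (m+1), B^i * A^(m-i)) * (((k:ℝ)+1) * (B-A)) := by
          apply mul_le_mul hsum_lo (by nlinarith) (by positivity) hsum_nonneg
      _ = (∑ i ∈ Finset.range (m+1), B^i * A^(m-i)) * (B-A) * ((k:ℝ)+1) := by ring
  · rw [hgeom, div_le_div_iff₀ (by positivity) (by positivity)]
    calc (∑ i ∈ Finset.range (m+1), B^i * A^(m-i)) * (B-A) * (k:ℝ)
        ≤ (((m:ℝ)+1) * B^m) * (1/(k:ℝ)) * (k:ℝ) := by
          apply mul_le_mul_of_nonneg_right _ hk0.le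
          apply mul_le_mul hsum_hi hghi (by nlinarith [hglo]) (by positivity)
      _ = B^m * ((m:ℝ)+1) := by field_simp

lemma lognat_nonneg (k : ℕ) : 0 ≤ Real.log k := by
  cases k with
  | zero => simp
  | succ k => exact Real.log_nonneg (by exact_mod_cast Nat.succ_le_succ (Nat.zero_le k))

lemma wgap' (m k : ℕ) (hk : 1 ≤ k) :
    ((Real.log k)^m * (1/((k+1:ℕ):ℝ)) ≤ (Real.log (k+1:ℕ))^(m+1)/((m:ℝ)+1) - (Real.log k)^(m+1)/((m:ℝ)+1))
    ∧ ((Real.log (k+1:ℕ))^(m+1)/((m:ℝ)+1) - (Real.log k)^(m+1)/((m:ℝ)+1) ≤ (Real.log (k+1:ℕ))^m * (1/(k:ℝ))) := by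
  obtain ⟨hlo, hhi⟩ := wgap m k hk
  constructor
  · push_cast at hlo ⊢; rw [mul_one_div, ← sub_div]; exact hlo
  · push_cast at hhi ⊢; rw [mul_one_div, ← sub_div]; exact hhi

lemma Tsum_est (m N : ℕ) :
    |∑ k ∈ Finset.range (N+1), (Real.log ((k:ℝ)+1))^m/((k:ℝ)+1)
      - (Real.log ((N:ℝ)+1))^(m+1)/((m:ℝ)+1)| ≤ 3*(1+(Real.log ((N:ℝ)+1))^m) := by
  set u : ℕ → ℝ := fun k => (Real.log k)^m with hu
  set v : ℕ → ℝ := fun k => 1/(k:ℝ) with hv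
  set w : ℕ → ℝ := fun k => (Real.log k)^(m+1)/((m:ℝ)+1) with hw
  have hunn : ∀ k : ℕ, 0 ≤ u k := fun k => pow_nonneg (lognat_nonneg k) m
  have hvnn : ∀ k : ℕ, 0 ≤ v k := fun k => by positivity
  have hmono : ∀ j k : ℕ, 1 ≤ j → j ≤ k → u j ≤ u k := by
    intro j k h1 hjk
    exact pow_le_pow_left₀ (lognat_nonneg j)
      (Real.log_le_log (by exact_mod_cast h1) (by exact_mod_cast hjk)) m
  have hvmono : ∀ j k : ℕ, 1 ≤ j → j ≤ k → v k ≤ v j := by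
    intro j k h1 hjk
    apply one_div_le_one_div_of_le (by exact_mod_cast h1) (by exact_mod_cast hjk)
  have hsum : ∑ k ∈ Finset.range (N+1), (Real.log ((k:ℝ)+1))^m/((k:ℝ)+1)
      = ∑ k ∈ Finset.range N, u (k+1) * v (k+1) + u (N+1) * v (N+1) := by
    rw [Finset.sum_range_succ]
    congr 1
    · apply Finset.sum_congr rfl; intro k _; simp only [hu, hv]; push_cast; ring
    · simp only [hu, hv]; push_cast; ring
  have htel : w (N+1) = ∑ k ∈ Finset.range N, (w (k+1+1) - w (k+1)) := by
    rw [Finset.sum_range_sub (fun i => w (i+1)) N]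
    have hw1 : w 1 = 0 := by simp [hw]
    rw [hw1, sub_zero]
  have hgoal : (Real.log ((N:ℝ)+1))^(m+1)/((m:ℝ)+1) = w (N+1) := by
    simp only [hw]; push_cast; ring
  have hgoal2 : (Real.log ((N:ℝ)+1))^m = u (N+1) := by
    simp only [hu]; push_cast; ring
  rw [hsum, hgoal, hgoal2, htel]
  have hterm : ∀ k ∈ Finset.range N,
      |u (k+1) * v (k+1) - (w (k+1+1) - w (k+1))|
        ≤ u (N+1) * (v (k+1) - v (k+1+1)) + (1/2) * (u (k+1+1) - u (k+1)) := by
    intro k hk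
    have hkN : k + 1 + 1 ≤ N + 1 := by have := Finset.mem_range.mp hk; omega
    obtain ⟨f1, f2⟩ := wgap' m (k+1) (by omega)
    have f1' : u (k+1) * v (k+1+1) ≤ w (k+1+1) - w (k+1) := f1
    have f2' : w (k+1+1) - w (k+1) ≤ u (k+1+1) * v (k+1) := f2
    have f3 : u (k+1) * v (k+1+1) ≤ u (k+1) * v (k+1) :=
      mul_le_mul_of_nonneg_left (hvmono (k+1) (k+1+1) (by omega) (by omega)) (hunn _)
    have f4 : u (k+1) * v (k+1) ≤ u (k+1+1) * v (k+1) :=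
      mul_le_mul_of_nonneg_right (hmono (k+1) (k+1+1) (by omega) (by omega)) (hvnn _)
    have g1 : u (k+1+1) * (v (k+1) - v (k+1+1)) ≤ u (N+1) * (v (k+1) - v (k+1+1)) := by
      apply mul_le_mul_of_nonneg_right (hmono (k+1+1) (N+1) (by omega) hkN)
      have := hvmono (k+1) (k+1+1) (by omega) (by omega); linarith
    have g2 : v (k+1+1) * (u (k+1+1) - u (k+1)) ≤ (1/2) * (u (k+1+1) - u (k+1)) := by
      apply mul_le_mul_of_nonneg_right _ (by have := hmono (k+1) (k+1+1) (by omega) (by omega); linarith)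
      have h2 : v (k+1+1) ≤ v 2 := hvmono 2 (k+1+1) (by omega) (by omega)
      refine h2.trans (le_of_eq ?_)
      norm_num [hv]
    rw [abs_le]
    constructor <;> nlinarith [f1', f2', f3, f4, g1, g2]
  calc |∑ k ∈ Finset.range N, u (k+1) * v (k+1) + u (N+1) * v (N+1)
        - ∑ k ∈ Finset.range N, (w (k+1+1) - w (k+1))|
      = |∑ k ∈ Finset.range N, (u (k+1) * v (k+1) - (w (k+1+1) - w (k+1))) + u (N+1) * v (N+1)| := by
        congr 1
        simp only [Finset.sum_sub_distrib]
        ring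
    _ ≤ |∑ k ∈ Finset.range N, (u (k+1) * v (k+1) - (w (k+1+1) - w (k+1)))| + |u (N+1) * v (N+1)| :=
        abs_add_le _ _
    _ ≤ ∑ k ∈ Finset.range N, |u (k+1) * v (k+1) - (w (k+1+1) - w (k+1))| + u (N+1) * v (N+1) := by
        gcongr
        · exact Finset.abs_sum_le_sum_abs _ _
        · rw [abs_of_nonneg (mul_nonneg (hunn _) (hvnn _))]
    _ ≤ ∑ k ∈ Finset.range N, (u (N+1) * (v (k+1) - v (k+1+1)) + (1/2) * (u (k+1+1) - u (k+1)))
          + u (N+1) * v (N+1) := by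
        exact add_le_add_left (Finset.sum_le_sum hterm) _
    _ ≤ 3*(1 + u (N+1)) := by
        rw [Finset.sum_add_distrib, ← Finset.mul_sum, ← Finset.mul_sum]
        rw [Finset.sum_range_sub' (fun i => v (i+1)) N]
        rw [Finset.sum_range_sub (fun i => u (i+1)) N]
        have hv1 : v 1 = 1 := by simp [hv]
        have hvN : v (N+1) ≤ 1 := by rw [← hv1]; exact hvmono 1 (N+1) le_rfl (by omega)
        have hu1 : 0 ≤ u 1 := hunn 1
        have huN : 0 ≤ u (N+1) := hunn (N+1)
        have hvNn : 0 ≤ v (N+1) := hvnn (N+1)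
        have hvs : v 1 - v (N+1) ≤ 1 := by linarith
        have hvs2 : 0 ≤ v 1 - v (N+1) := by rw [hv1]; linarith
        nlinarith [mul_le_mul_of_nonneg_left hvs huN, mul_le_mul_of_nonneg_left hvN huN]

lemma geom_tail_bound (b : ℝ) (hb0 : 0 < b) (hb1 : b ≤ 1) (n : ℕ) :
    ∑ k ∈ Finset.range n, (1-b)^(k+1) ≤ 1/b := by
  have hr0 : 0 ≤ 1 - b := by linarith
  have hr1 : 1 - b < 1 := by linarith
  have h1 : ∑ k ∈ Finset.range n, (1-b)^(k+1) ≤ ∑ k ∈ Finset.range n, (1-b)^k := by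
    apply Finset.sum_le_sum
    intro k _
    exact pow_le_pow_of_le_one hr0 (by linarith) (by omega)
  have h2 : ∑ k ∈ Finset.range n, (1-b)^k ≤ 1/b := by
    have := geom_sum_mul (1-b) n
    have hsnn : (0:ℝ) ≤ (1-b)^n := pow_nonneg hr0 n
    rw [div_eq_inv_mul, le_inv_mul_iff₀ hb0]
    nlinarith [this]
  linarith

lemma one_add_mul_bound (L : ℝ) (hL : 0 ≤ L) (m : ℕ) (hm : 1 ≤ m) :
    (1 + L) * (1 + L^(m-1)) ≤ 4 * (1 + L^m) := by
  rcases le_total L 1 with h | h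
  · have h1 : L^(m-1) ≤ 1 := pow_le_one₀ hL h
    have h2 : 0 ≤ L^m := pow_nonneg hL m
    nlinarith
  · have h1 : L^(m-1) ≤ L^m := pow_le_pow_right₀ h (by omega)
    have h2 : L ≤ L^m := by
      calc L = L^1 := (pow_one L).symm
        _ ≤ L^m := pow_le_pow_right₀ h hm
    have h3 : (1:ℝ) ≤ L^m := one_le_pow₀ h
    have h4 : L^m = L * L^(m-1) := by
      nth_rewrite 1 [show m = (m-1)+1 from by omega]
      rw [pow_succ']
    nlinarith

lemma Sb_est (b : ℝ) (hb0 : 0 < b) (hb1 : b ≤ 1) :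
    ∀ m : ℕ, 1 ≤ m → ∃ C : ℝ, 0 < C ∧ ∀ n : ℕ, 1 ≤ n →
      |Sb b m n - (Real.log n)^m / (m.factorial : ℝ)| ≤ C * (1 + (Real.log n)^(m-1)) := by
  intro m hm
  induction m, hm using Nat.le_induction with
  | base =>
      refine ⟨1 + 1/b, by have := one_div_pos.mpr hb0; linarith, ?_⟩
      intro n hn
      have h1 : Sb b 1 n = ∑ k ∈ Finset.range n, ((1:ℝ)/(k+1))
          - ∑ k ∈ Finset.range n, (1-b)^(k+1)/((k:ℝ)+1) := by
        rw [show (1:ℕ) = 0 + 1 from rfl, Sb_rec, ← Finset.sum_sub_distrib]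
        apply Finset.sum_congr rfl
        intro k _
        rw [Sb_zero]
        push_cast
        ring
      have hup := harmonic_upper n hn
      have hlo := harmonic_lower n hn
      have hg : 0 ≤ ∑ k ∈ Finset.range n, (1-b)^(k+1)/((k:ℝ)+1) :=
        Finset.sum_nonneg fun k _ => div_nonneg (pow_nonneg (by linarith) _) (by positivity)
      have hg2 : ∑ k ∈ Finset.range n, (1-b)^(k+1)/((k:ℝ)+1) ≤ 1/b := by
        refine le_trans (Finset.sum_le_sum fun k _ => ?_) (geom_tail_bound b hb0 hb1 n)
        rw [div_le_iff₀ (by positivity)]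
        nlinarith [pow_nonneg (show (0:ℝ) ≤ 1-b by linarith) (k+1), (Nat.cast_nonneg k : (0:ℝ) ≤ k)]
      rw [h1]
      simp only [pow_one, Nat.factorial_one, Nat.cast_one, div_one, Nat.sub_self, pow_zero]
      rw [abs_le]
      have hbinv : 1 ≤ 1/b := by rw [le_div_iff₀ hb0]; linarith
      constructor <;> nlinarith
  | succ m hm ih =>
      obtain ⟨C, hC0, hC⟩ := ih
      refine ⟨4*C + 3, by linarith, ?_⟩
      intro n hn
      obtain ⟨N, rfl⟩ : ∃ N, n = N + 1 := ⟨n - 1, by omega⟩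
      set L := Real.log ((N:ℝ)+1) with hL
      have hL0 : 0 ≤ L := by
        rw [hL]; exact Real.log_nonneg (by push_cast; linarith [Nat.cast_nonneg (α := ℝ) N])
      -- decomposition
      have hdec : Sb b (m+1) (N+1) - L^(m+1) / ((m+1).factorial : ℝ)
          = (∑ k ∈ Finset.range (N+1),
              (Sb b m (k+1) - (Real.log ((k:ℝ)+1))^m / (m.factorial : ℝ)) / ((k:ℝ)+1))
            + (1/(m.factorial : ℝ)) *
              ((∑ k ∈ Finset.range (N+1), (Real.log ((k:ℝ)+1))^m/((k:ℝ)+1)) - L^(m+1)/((m:ℝ)+1)) := by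
        rw [Sb_rec]
        have e1 : ∑ k ∈ Finset.range (N+1), Sb b m (k+1) / ((k+1:ℕ):ℝ)
            = ∑ k ∈ Finset.range (N+1),
                ((Sb b m (k+1) - (Real.log ((k:ℝ)+1))^m / (m.factorial : ℝ)) / ((k:ℝ)+1)
                  + (1/(m.factorial : ℝ)) * ((Real.log ((k:ℝ)+1))^m/((k:ℝ)+1))) := by
          apply Finset.sum_congr rfl
          intro k _
          have hf : (0:ℝ) < (m.factorial : ℝ) := by exact_mod_cast m.factorial_pos
          push_cast
          field_simp
          ring
        rw [e1, Finset.sum_add_distrib, ← Finset.mul_sum]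
        have e2 : (((m+1).factorial : ℝ)) = ((m:ℝ)+1) * (m.factorial : ℝ) := by
          rw [Nat.factorial_succ]; push_cast; ring
        have hf : (0:ℝ) < (m.factorial : ℝ) := by exact_mod_cast m.factorial_pos
        rw [e2]
        field_simp
        ring
      have hcast : Real.log ((N+1:ℕ):ℝ) = L := by rw [hL]; push_cast; ring_nf
      rw [hcast, Nat.add_sub_cancel, hdec]
      -- bound pieces
      have hT := Tsum_est m N
      have hlogle : ∀ k ∈ Finset.range (N+1), Real.log ((k:ℝ)+1) ≤ L := by
        intro k hk
        have hkn : k ≤ N := by have := Finset.mem_range.mp hk; omega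
        rw [hL]
        apply Real.log_le_log (by positivity)
        have : (k:ℝ) ≤ (N:ℝ) := Nat.cast_le.mpr hkn
        linarith
      have hlognn : ∀ k : ℕ, 0 ≤ Real.log ((k:ℝ)+1) := by
        intro k
        apply Real.log_nonneg
        have : (0:ℝ) ≤ (k:ℝ) := Nat.cast_nonneg k
        linarith
      have herr : |∑ k ∈ Finset.range (N+1),
          (Sb b m (k+1) - (Real.log ((k:ℝ)+1))^m / (m.factorial : ℝ)) / ((k:ℝ)+1)|
          ≤ C * (1 + L^(m-1)) * (1 + L) := by
        refine le_trans (Finset.abs_sum_le_sum_abs _ _) ?_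
        have hterm : ∀ k ∈ Finset.range (N+1),
            |(Sb b m (k+1) - (Real.log ((k:ℝ)+1))^m / (m.factorial : ℝ)) / ((k:ℝ)+1)|
              ≤ (C * (1 + L^(m-1))) * (1/((k:ℝ)+1)) := by
          intro k hk
          have hk1 : (0:ℝ) < (k:ℝ)+1 := by positivity
          rw [abs_div, abs_of_pos hk1, div_eq_mul_one_div]
          apply mul_le_mul_of_nonneg_right _ (by positivity)
          have hCk := hC (k+1) (by omega)
          push_cast at hCk
          refine hCk.trans ?_
          apply mul_le_mul_of_nonneg_left _ hC0.le
          have h1 : (Real.log ((k:ℝ)+1))^(m-1) ≤ L^(m-1) :=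
            pow_le_pow_left₀ (hlognn k) (hlogle k hk) (m-1)
          linarith
        refine le_trans (Finset.sum_le_sum hterm) ?_
        rw [← Finset.mul_sum]
        apply mul_le_mul_of_nonneg_left _ (by positivity)
        have := harmonic_upper (N+1) (by omega)
        push_cast at this
        linarith
      have hD : |(∑ k ∈ Finset.range (N+1), (Real.log ((k:ℝ)+1))^m/((k:ℝ)+1)) - L^(m+1)/((m:ℝ)+1)|
          ≤ 3*(1 + L^m) := Tsum_est m N
      have hfac1 : (1:ℝ) ≤ (m.factorial : ℝ) := by exact_mod_cast m.factorial_pos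
      have hkey : (1 + L) * (1 + L^(m-1)) ≤ 4 * (1 + L^m) := one_add_mul_bound L hL0 m hm
      have hLm : 0 ≤ L^m := pow_nonneg hL0 m
      rw [abs_le] at herr hD ⊢
      have hDiv : |(1/(m.factorial : ℝ)) *
          ((∑ k ∈ Finset.range (N+1), (Real.log ((k:ℝ)+1))^m/((k:ℝ)+1)) - L^(m+1)/((m:ℝ)+1))|
          ≤ 3*(1 + L^m) := by
        rw [abs_mul]
        have h1 : |(1:ℝ)/(m.factorial : ℝ)| ≤ 1 := by
          rw [abs_of_pos (by positivity)]
          rw [div_le_one (by linarith)]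
          linarith
        have h2 : |(∑ k ∈ Finset.range (N+1), (Real.log ((k:ℝ)+1))^m/((k:ℝ)+1)) - L^(m+1)/((m:ℝ)+1)|
            ≤ 3*(1+L^m) := by rw [abs_le]; exact hD
        calc |(1:ℝ)/(m.factorial:ℝ)| * |_| ≤ 1 * (3*(1+L^m)) :=
              mul_le_mul h1 h2 (abs_nonneg _) one_pos.le
          _ = 3*(1+L^m) := by ring
      rw [abs_le] at hDiv
      constructor <;> nlinarith [herr.1, herr.2, hDiv.1, hDiv.2, hkey, hC0.le, hLm]

open MeasureTheory in
lemma oneD_integral (δ : ℝ) (hδ0 : 0 < δ) (k : ℕ) :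
    ∫ t, Set.indicator (Set.Icc (0:ℝ) δ) (fun t => t^k) t = δ^(k+1)/((k:ℝ)+1) := by
  rw [integral_indicator measurableSet_Icc, MeasureTheory.integral_Icc_eq_integral_Ioc,
    ← intervalIntegral.integral_of_le hδ0.le, integral_pow]
  rw [zero_pow (by omega)]
  push_cast
  ring

open MeasureTheory in
lemma indicator_integrable (δ : ℝ) (k : ℕ) :
    Integrable (Set.indicator (Set.Icc (0:ℝ) δ) (fun t => t^k)) := by
  rw [integrable_indicator_iff measurableSet_Icc]
  exact (continuous_pow k).continuousOn.integrableOn_compact isCompact_Icc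

open MeasureTheory in
lemma cube_integral (d : ℕ) (δ a : ℝ) (hδ0 : 0 < δ) (n : ℕ) (hn : 1 ≤ n) :
    ∫ x in Set.Icc (0 : Fin d → ℝ) (fun _ => δ), (1 - a * ∏ i, x i) ^ (n - 1)
      = ∑ k ∈ Finset.range n, ((n-1).choose k : ℝ) * (-a)^k * (δ^(k+1)/((k:ℝ)+1))^d := by
  set g : ℕ → ℝ → ℝ := fun k => Set.indicator (Set.Icc (0:ℝ) δ) (fun t => t^k) with hg
  have hpoint : ∀ x : Fin d → ℝ,
      Set.indicator (Set.Icc (0 : Fin d → ℝ) (fun _ => δ))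
        (fun x => (1 - a * ∏ i, x i) ^ (n - 1)) x
      = ∑ k ∈ Finset.range n, ((n-1).choose k : ℝ) * (-a)^k * ∏ i, g k (x i) := by
    intro x
    by_cases hx : x ∈ Set.Icc (0 : Fin d → ℝ) (fun _ => δ)
    · rw [Set.indicator_of_mem hx]
      have hxi : ∀ i, x i ∈ Set.Icc (0:ℝ) δ := by
        rw [Set.mem_Icc] at hx
        intro i
        exact ⟨hx.1 i, hx.2 i⟩
      have hprod : ∀ k, ∏ i, g k (x i) = (∏ i, x i)^k := by
        intro k
        rw [← Finset.prod_pow]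
        apply Finset.prod_congr rfl
        intro i _
        exact Set.indicator_of_mem (hxi i) _
      simp only [hprod]
      have hb := add_pow (-(a * ∏ i, x i)) 1 (n-1)
      have hrw : (1 - a * ∏ i, x i) = (-(a * ∏ i, x i)) + 1 := by ring
      rw [hrw, hb, show n - 1 + 1 = n from by omega]
      apply Finset.sum_congr rfl
      intro k _
      rw [one_pow, neg_pow, mul_pow]
      ring
    · rw [Set.indicator_of_notMem hx]
      have hex : ∃ i, x i ∉ Set.Icc (0:ℝ) δ := by
        by_contra h
        push_neg at h
        apply hx
        rw [Set.mem_Icc]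
        exact ⟨fun i => (h i).1, fun i => (h i).2⟩
      obtain ⟨i, hi⟩ := hex
      symm
      apply Finset.sum_eq_zero
      intro k _
      have hzero : ∏ j, g k (x j) = 0 :=
        Finset.prod_eq_zero (Finset.mem_univ i) (Set.indicator_of_notMem hi _)
      rw [hzero, mul_zero]
  have hint : ∀ k : ℕ, Integrable (fun x : Fin d → ℝ => ∏ i, g k (x i)) :=
    fun k => Integrable.fintype_prod (fun _ => indicator_integrable δ k)
  calc ∫ x in Set.Icc (0 : Fin d → ℝ) (fun _ => δ), (1 - a * ∏ i, x i) ^ (n - 1)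
      = ∫ x : Fin d → ℝ, Set.indicator (Set.Icc (0 : Fin d → ℝ) (fun _ => δ))
          (fun x => (1 - a * ∏ i, x i) ^ (n - 1)) x := by
        rw [integral_indicator measurableSet_Icc]
    _ = ∫ x : Fin d → ℝ, ∑ k ∈ Finset.range n, ((n-1).choose k : ℝ) * (-a)^k * ∏ i, g k (x i) := by
        congr 1
        funext x
        exact hpoint x
    _ = ∑ k ∈ Finset.range n, ∫ x : Fin d → ℝ, ((n-1).choose k : ℝ) * (-a)^k * ∏ i, g k (x i) := by
        apply integral_finset_sum
        intro k _
        exact ((hint k).const_mul _)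
    _ = ∑ k ∈ Finset.range n, ((n-1).choose k : ℝ) * (-a)^k * (δ^(k+1)/((k:ℝ)+1))^d := by
        apply Finset.sum_congr rfl
        intro k _
        rw [MeasureTheory.integral_const_mul]
        congr 1
        rw [MeasureTheory.volume_pi, MeasureTheory.integral_fintype_prod_eq_pow (g k), Fintype.card_fin,
          oneD_integral δ hδ0 k]

open MeasureTheory in
lemma key_formula (d : ℕ) (hd : 1 ≤ d) (δ a : ℝ) (hδ0 : 0 < δ) (ha0 : 0 < a) (n : ℕ) (hn : 1 ≤ n) :
    (n:ℝ) * ∫ x in Set.Icc (0 : Fin d → ℝ) (fun _ => δ), (1 - a * ∏ i, x i) ^ (n - 1)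
      = (1/a) * Sb (a * δ^d) (d-1) n := by
  rw [cube_integral d δ a hδ0 n hn, Finset.mul_sum, Sb, Finset.mul_sum]
  apply Finset.sum_congr rfl
  intro k hk
  have hnc : (n:ℝ) * ((n-1).choose k : ℝ) = (n.choose (k+1) : ℝ) * ((k:ℝ)+1) := by
    have h := Nat.add_one_mul_choose_eq (n-1) k
    rw [show n-1+1 = n from by omega] at h
    have h2 := congrArg (Nat.cast : ℕ → ℝ) h
    push_cast at h2
    simpa [Nat.succ_eq_add_one] using h2
  have hk1 : ((k:ℝ)+1) ≠ 0 := by positivity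
  have hpow : ((k:ℝ)+1)^d = ((k:ℝ)+1) * ((k:ℝ)+1)^(d-1) := by
    nth_rewrite 1 [show d = (d-1)+1 from by omega]
    rw [pow_succ']
  have hmp : (a * δ^d)^(k+1) = a^(k+1) * (δ^(k+1))^d := by
    rw [mul_pow, ← pow_mul, ← pow_mul, Nat.mul_comm]
  have ha' : a ≠ 0 := ne_of_gt ha0
  rw [div_pow, neg_pow, hmp, hpow]
  set E := (δ^(k+1))^d with hE
  set F := ((k:ℝ)+1)^(d-1) with hF
  have hF0 : F ≠ 0 := by rw [hF]; positivity
  field_simp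
  push_cast
  linear_combination (a^k * a * E * F) * hnc

/-- For `0 < δ ≤ 1` and `0 < a ≤ δ^{-d}`,
`n ∫_{[0,δ]^d} (1 - a x₁⋯x_d)^{n-1} dx = (1/a) (log n)^{d-1}/(d-1)! + O((log n)^{d-2})`. -/
theorem stmt3 (d : ℕ) (hd : 1 ≤ d) (δ a : ℝ) (hδ0 : 0 < δ) (hδ1 : δ ≤ 1)
    (ha0 : 0 < a) (ha : a ≤ (δ ^ d)⁻¹) :
    (fun n : ℕ =>
        (n : ℝ) * (∫ x in Set.Icc (0 : Fin d → ℝ) (fun _ => δ),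
            (1 - a * ∏ i, x i) ^ (n - 1)) -
          (1 / a) * (Real.log n) ^ (d - 1) / (d - 1).factorial)
      =O[atTop] (fun n : ℕ => (Real.log n) ^ (d - 2)) := by
  set b := a * δ^d with hbdef
  have hδd : 0 < δ^d := pow_pos hδ0 d
  have hb0 : 0 < b := mul_pos ha0 hδd
  have hb1 : b ≤ 1 := by
    rw [hbdef]
    calc a * δ^d ≤ (δ^d)⁻¹ * δ^d := mul_le_mul_of_nonneg_right ha hδd.le
      _ = 1 := inv_mul_cancel₀ (ne_of_gt hδd)
  have hest : ∃ C : ℝ, 0 < C ∧ ∀ n : ℕ, 1 ≤ n →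
      |Sb b (d-1) n - (Real.log n)^(d-1) / ((d-1).factorial : ℝ)|
        ≤ C * (1 + (Real.log n)^(d-2)) := by
    rcases eq_or_lt_of_le hd with h1 | h2
    · refine ⟨1, one_pos, ?_⟩
      intro n hn
      rw [← h1]
      simp only [Nat.sub_self, Nat.factorial_zero, pow_zero, Nat.cast_one, div_one]
      rw [Sb_zero]
      have h1b : 0 ≤ 1 - b := by linarith
      have h2b : (1-b)^n ≤ 1 := pow_le_one₀ h1b (by linarith)
      have h3b : 0 ≤ (1-b)^n := pow_nonneg h1b n
      rw [show (1:ℕ) - 2 = 0 from rfl, pow_zero]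
      rw [abs_le]
      constructor <;> linarith
    · obtain ⟨C, hC0, hC⟩ := Sb_est b hb0 hb1 (d-1) (by omega)
      refine ⟨C, hC0, ?_⟩
      intro n hn
      have h := hC n hn
      rwa [show d-1-1 = d-2 from by omega] at h
  obtain ⟨C, hC0, hC⟩ := hest
  rw [Asymptotics.isBigO_iff]
  refine ⟨(1/a) * (2*C), ?_⟩
  filter_upwards [Filter.eventually_ge_atTop 3] with n hn
  have hn1 : 1 ≤ n := by omega
  have hkey := key_formula d hd δ a hδ0 ha0 n hn1
  have hlog1 : 1 ≤ Real.log n := by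
    have he : Real.exp 1 ≤ 3 := by
      have := Real.exp_one_lt_d9
      norm_num at this ⊢
      linarith
    calc (1:ℝ) = Real.log (Real.exp 1) := (Real.log_exp 1).symm
      _ ≤ Real.log n := by
          apply Real.log_le_log (Real.exp_pos 1)
          refine he.trans ?_
          exact_mod_cast hn
  have hlpos : 0 ≤ (Real.log n)^(d-2) := pow_nonneg (by linarith) _
  have hpow1 : 1 ≤ (Real.log n)^(d-2) := one_le_pow₀ hlog1
  have hrw : (n : ℝ) * (∫ x in Set.Icc (0 : Fin d → ℝ) (fun _ => δ),
      (1 - a * ∏ i, x i) ^ (n - 1)) - (1 / a) * (Real.log n) ^ (d - 1) / ((d-1).factorial : ℝ)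
      = (1/a) * (Sb b (d-1) n - (Real.log n)^(d-1) / ((d-1).factorial : ℝ)) := by
    rw [hkey]
    ring
  rw [hrw, Real.norm_eq_abs, Real.norm_eq_abs, abs_mul, abs_of_pos (by positivity : (0:ℝ) < 1/a)]
  calc (1/a) * |Sb b (d-1) n - (Real.log n)^(d-1) / ((d-1).factorial : ℝ)|
      ≤ (1/a) * (C * (1 + (Real.log n)^(d-2))) :=
        mul_le_mul_of_nonneg_left (hC n hn1) (by positivity)
    _ ≤ (1/a) * (2*C) * |(Real.log n)^(d-2)| := by
        rw [abs_of_nonneg hlpos]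
        have : C * (1 + (Real.log n)^(d-2)) ≤ 2*C*(Real.log n)^(d-2) := by nlinarith
        calc (1/a) * (C * (1 + (Real.log n)^(d-2))) ≤ (1/a) * (2*C*(Real.log n)^(d-2)) :=
              mul_le_mul_of_nonneg_left this (by positivity)
          _ = (1/a) * (2*C) * (Real.log n)^(d-2) := by ring
end

section
/- Let 0 < δ < 1 and 0 < a ≤ 1. Then as n → ∞, n ∫_{[0,1]^d \ [0,δ]^d} (1 - a x_1⋯x_d)^{n-1} dx = O((log n)^{d-2}). -/
open MeasureTheory Filter Asymptotics Set

/-!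
Split off one coordinate at a time: with `Φₘ(b) = ∫_{[0,1]^m} (1 - b ∏ xᵢ)^k dx` one has
`Φₘ₊₁(b) = ∫₀¹ Φₘ(bt) dt`. Since `(k+1) Φ₁(b) ≤ 1/b`, and since integrating
`min (k+1, C/(bt))` over `t ∈ [0,1]` costs a factor `1 + log (k+1)`, induction gives
`(k+1) Φₘ(b) ≤ (1 + log (k+1))^(m-1) / b`. Outside `[0,δ]^d` some coordinate exceeds `δ`, so the
integrand is dominated there by `(1 - aδ ∏_{j ≠ i} x_j)^k` for some `i`, whose integral is
`Φ_{d-1}(aδ)`.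
-/

theorem volume_restrict_unitCube (m : ℕ) :
    (volume : Measure (Fin m → ℝ)).restrict (Icc 0 1) =
      Measure.pi fun _ => volume.restrict (Icc (0 : ℝ) 1) := by
  rw [← pi_univ_Icc, volume_pi, Measure.restrict_pi_pi]
  rfl

theorem volume_real_unitCube (m : ℕ) : volume.real (Icc (0 : Fin m → ℝ) 1) = 1 := by
  simp [Measure.real, Real.volume_Icc_pi]

theorem integral_unitCube_eq_integral_insertNth {m : ℕ} (i : Fin (m + 1))
    {f : (Fin (m + 1) → ℝ) → ℝ} (hf : IntegrableOn f (Icc 0 1)) :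
    ∫ x in Icc (0 : Fin (m + 1) → ℝ) 1, f x =
      ∫ t in Icc (0 : ℝ) 1, ∫ y in Icc (0 : Fin m → ℝ) 1, f (i.insertNth t y) := by
  have he := (measurePreserving_piFinSuccAbove
    (fun _ : Fin (m + 1) => volume.restrict (Icc (0 : ℝ) 1)) i).symm
  rw [IntegrableOn, volume_restrict_unitCube] at hf
  rw [volume_restrict_unitCube, volume_restrict_unitCube, ← he.integral_comp']
  rw [← he.integrable_comp_emb (MeasurableEquiv.measurableEmbedding _)] at hf
  exact integral_prod (fun p => f (i.insertNth p.1 p.2)) hf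

theorem mul_prod_mem_Icc {m : ℕ} {b : ℝ} (hb : b ∈ Icc (0 : ℝ) 1) {x : Fin m → ℝ}
    (hx : x ∈ Icc 0 1) : b * ∏ i, x i ∈ Icc (0 : ℝ) 1 :=
  unitInterval.mul_mem hb (unitInterval.prod_mem fun i _ => ⟨hx.1 i, hx.2 i⟩)

theorem one_sub_pow_mem_Icc (k : ℕ) {u : ℝ} (hu : u ∈ Icc (0 : ℝ) 1) :
    (1 - u) ^ k ∈ Icc (0 : ℝ) 1 :=
  ⟨pow_nonneg (by linarith [hu.2]) k, pow_le_one₀ (by linarith [hu.2]) (by linarith [hu.1])⟩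

theorem succ_mul_mul_one_sub_pow_le_one (k : ℕ) {b : ℝ} (hb : b ∈ Icc (0 : ℝ) 1) :
    (k + 1) * b * (1 - b) ^ k ≤ 1 := by
  have hterm : ∀ j ∈ Finset.range (k + 2),
      0 ≤ b ^ j * (1 - b) ^ (k + 1 - j) * (k + 1).choose j := fun j _ => by
    have := hb.1
    have : 0 ≤ 1 - b := by linarith [hb.2]
    positivity
  -- `(k + 1) b (1 - b)^k` is one term of the binomial expansion of `(b + (1 - b))^(k + 1)`.
  calc (k + 1) * b * (1 - b) ^ k = b ^ 1 * (1 - b) ^ (k + 1 - 1) * (k + 1).choose 1 := by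
        push_cast [Nat.choose_one_right]; ring
    _ ≤ ∑ j ∈ Finset.range (k + 1 + 1), b ^ j * (1 - b) ^ (k + 1 - j) * (k + 1).choose j :=
        Finset.single_le_sum hterm (by simp)
    _ = 1 := by rw [← add_pow]; simp

theorem setIntegral_le_mul_one_add_log {ψ : ℝ → ℝ} {M c : ℝ} (hM : 1 ≤ M) (hc : 1 ≤ c)
    (hψ : IntegrableOn ψ (Icc 0 1)) (hψM : ∀ t ∈ Icc (0 : ℝ) 1, ψ t ≤ M)
    (hψc : ∀ t ∈ Ioc (0 : ℝ) 1, ψ t ≤ c * t⁻¹) :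
    ∫ t in Icc (0 : ℝ) 1, ψ t ≤ c * (1 + Real.log M) := by
  -- cut `[0, 1]` roughly where the bounds `M` and `c / t` cross
  set t₀ := min 1 (c / M)
  have ht₀ : 0 < t₀ := lt_min one_pos (by positivity)
  have ht₀1 : t₀ ≤ 1 := min_le_left _ _
  have hMt₀ : 1 ≤ M * t₀ ∧ M * t₀ ≤ c := by
    have hM0 : 0 < M := by linarith
    rw [mul_min_of_nonneg _ _ hM0.le, mul_one, mul_div_cancel₀ _ hM0.ne']
    exact ⟨le_min hM hc, min_le_right _ _⟩
  have hψlow : IntegrableOn ψ (Icc 0 t₀) := hψ.mono_set (Icc_subset_Icc le_rfl ht₀1)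
  have hψhigh : IntegrableOn ψ (Ioc t₀ 1) :=
    hψ.mono_set (Ioc_subset_Icc_self.trans (Icc_subset_Icc ht₀.le le_rfl))
  have hlow : ∫ t in Icc 0 t₀, ψ t ≤ c := by
    calc ∫ t in Icc 0 t₀, ψ t ≤ ∫ _ in Icc 0 t₀, M :=
          setIntegral_mono_on hψlow (integrableOn_const (by simp)) measurableSet_Icc
            fun t ht => hψM t ⟨ht.1, ht.2.trans ht₀1⟩
      _ = M * t₀ := by simp [Real.volume_real_Icc_of_le ht₀.le, mul_comm]
      _ ≤ c := hMt₀.2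
  have hhigh : ∫ t in Ioc t₀ 1, ψ t ≤ c * Real.log M := by
    have hinv : IntegrableOn (fun t => c * t⁻¹) (Ioc t₀ 1) :=
      (continuousOn_const.mul (continuousOn_inv₀.mono fun t ht => (ht₀.trans_le ht.1).ne'))
        |>.integrableOn_compact isCompact_Icc |>.mono_set Ioc_subset_Icc_self
    calc ∫ t in Ioc t₀ 1, ψ t ≤ ∫ t in Ioc t₀ 1, c * t⁻¹ :=
          setIntegral_mono_on hψhigh hinv measurableSet_Ioc
            fun t ht => hψc t ⟨ht₀.trans ht.1, ht.2⟩
      _ = c * Real.log t₀⁻¹ := by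
          rw [integral_const_mul, ← intervalIntegral.integral_of_le ht₀1,
            integral_inv (by simp [uIcc_of_le ht₀1, ht₀]), one_div]
      _ ≤ c * Real.log M := by
          gcongr
          rw [inv_le_iff_one_le_mul₀ ht₀]
          exact hMt₀.1
  rw [← Icc_union_Ioc_eq_Icc ht₀.le ht₀1, setIntegral_union
    ((Iic_disjoint_Ioc le_rfl).mono_left Icc_subset_Iic_self) measurableSet_Ioc hψlow hψhigh]
  linarith

noncomputable def prodPowIntegral (m k : ℕ) (b : ℝ) : ℝ :=
  ∫ x in Icc (0 : Fin m → ℝ) 1, (1 - b * ∏ i, x i) ^ k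

namespace prodPowIntegral

theorem zero_left (k : ℕ) (b : ℝ) : prodPowIntegral 0 k b = (1 - b) ^ k := by
  rw [prodPowIntegral]
  simp only [Finset.univ_eq_empty, Finset.prod_empty, mul_one]
  rw [setIntegral_const, volume_real_unitCube, one_smul]

theorem succ_left (m k : ℕ) (b : ℝ) :
    prodPowIntegral (m + 1) k b = ∫ t in Icc (0 : ℝ) 1, prodPowIntegral m k (b * t) := by
  rw [prodPowIntegral, integral_unitCube_eq_integral_insertNth 0
    (Continuous.integrableOn_Icc (by fun_prop))]
  simp only [Fin.prod_insertNth, prodPowIntegral, mul_assoc]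

theorem one_left (k : ℕ) {b : ℝ} (hb : b ≠ 0) :
    prodPowIntegral 1 k b = (1 - (1 - b) ^ (k + 1)) / (b * (k + 1)) := by
  rw [succ_left, integral_Icc_eq_integral_Ioc, ← intervalIntegral.integral_of_le zero_le_one]
  simp only [zero_left]
  rw [intervalIntegral.integral_comp_sub_mul (fun u => u ^ k) hb, integral_pow]
  simp only [mul_zero, sub_zero, mul_one, one_pow, smul_eq_mul]
  field_simp

theorem continuous (m k : ℕ) : Continuous (prodPowIntegral m k) :=
  continuous_parametric_integral_of_continuous (by fun_prop) isCompact_Icc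

theorem le_one (m k : ℕ) {b : ℝ} (hb : b ∈ Icc (0 : ℝ) 1) : prodPowIntegral m k b ≤ 1 :=
  calc prodPowIntegral m k b ≤ ∫ _ in Icc (0 : Fin m → ℝ) 1, (1 : ℝ) :=
        setIntegral_mono_on (Continuous.integrableOn_Icc (by fun_prop))
          continuous_const.integrableOn_Icc measurableSet_Icc
          fun _ hx => (one_sub_pow_mem_Icc k (mul_prod_mem_Icc hb hx)).2
    _ = 1 := by simp [volume_real_unitCube]

theorem succ_mul_le (m k : ℕ) {b : ℝ} (hb0 : 0 < b) (hb1 : b ≤ 1) :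
    (k + 1) * prodPowIntegral m k b ≤ (1 + Real.log (k + 1)) ^ (m - 1) / b :=
  match m with
  | 0 => by
    rw [zero_left, pow_zero, le_div_iff₀ hb0, mul_right_comm]
    exact succ_mul_mul_one_sub_pow_le_one k ⟨hb0.le, hb1⟩
  | 1 => by
    have : 0 ≤ (1 - b) ^ (k + 1) := pow_nonneg (by linarith) _
    calc (k + 1) * prodPowIntegral 1 k b = (1 - (1 - b) ^ (k + 1)) / b := by
          rw [one_left k hb0.ne']; field_simp
      _ ≤ (1 + Real.log (k + 1)) ^ (1 - 1) / b := by rw [pow_zero]; gcongr; linarith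
  | m + 2 => by
    set L := 1 + Real.log (k + 1)
    have hL : 1 ≤ L := le_add_of_nonneg_right (Real.log_nonneg (by simp))
    rw [succ_left, ← integral_const_mul, show m + 2 - 1 = m + 1 from rfl, pow_succ,
      mul_div_right_comm]
    refine setIntegral_le_mul_one_add_log (by simp) ((one_le_pow₀ hL).trans
      (le_div_self (by positivity) hb0 hb1)) ?_ (fun t ht => ?_) (fun t ht => ?_)
    · exact (continuous_const.mul ((continuous (m + 1) k).comp
        (continuous_const_mul b))).integrableOn_Icc
    · exact mul_le_of_le_one_right (by positivity)
        (le_one _ _ (unitInterval.mul_mem ⟨hb0.le, hb1⟩ ht))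
    · calc (k + 1) * prodPowIntegral (m + 1) k (b * t) ≤ L ^ m / (b * t) :=
            succ_mul_le (m + 1) k (mul_pos hb0 ht.1) (mul_le_one₀ hb1 ht.1.le ht.2)
        _ = L ^ m / b * t⁻¹ := by rw [← div_div, div_eq_mul_inv]

end prodPowIntegral

theorem setIntegral_unitCube_diff_le (m k : ℕ) {a δ : ℝ} (ha : a ∈ Icc (0 : ℝ) 1)
    (hδ : δ ∈ Icc (0 : ℝ) 1) :
    ∫ x in Icc (0 : Fin (m + 1) → ℝ) 1 \ Icc 0 (fun _ => δ), (1 - a * ∏ i, x i) ^ k ≤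
      (m + 1) * prodPowIntegral m k (a * δ) := by
  set g : Fin (m + 1) → (Fin (m + 1) → ℝ) → ℝ :=
    fun i x => (1 - a * δ * ∏ j, x (i.succAbove j)) ^ k
  have hgint : ∀ i, IntegrableOn (g i) (Icc 0 1) :=
    fun i => Continuous.integrableOn_Icc (by fun_prop)
  have hsumint : IntegrableOn (fun x => ∑ i, g i x) (Icc 0 1) :=
    integrable_finsetSum _ fun i _ => hgint i
  have hg : ∀ i, ∫ x in Icc 0 1, g i x = prodPowIntegral m k (a * δ) := fun i => by
    rw [integral_unitCube_eq_integral_insertNth i (hgint i)]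
    simp only [g, Fin.insertNth_apply_succAbove]
    rw [setIntegral_const, Real.volume_real_Icc_of_le zero_le_one, sub_zero, one_smul]
    rfl
  have hgnonneg : ∀ x ∈ Icc (0 : Fin (m + 1) → ℝ) 1, ∀ i, 0 ≤ g i x := fun x hx i =>
    (one_sub_pow_mem_Icc k (mul_prod_mem_Icc (unitInterval.mul_mem ha hδ)
      (x := fun j => x (i.succAbove j)) ⟨fun j => hx.1 _, fun j => hx.2 _⟩)).1
  have hle : ∀ x ∈ Icc (0 : Fin (m + 1) → ℝ) 1 \ Icc 0 (fun _ => δ),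
      (1 - a * ∏ i, x i) ^ k ≤ ∑ i, g i x := by
    rintro x ⟨hx, hxδ⟩
    obtain ⟨i, hi⟩ : ∃ i, δ < x i := by
      simpa [mem_Icc, Pi.le_def, hx.1] using hxδ
    calc (1 - a * ∏ i, x i) ^ k ≤ g i x := by
          refine pow_le_pow_left₀ (sub_nonneg.2 (mul_prod_mem_Icc ha hx).2) ?_ k
          rw [Fin.prod_univ_succAbove _ i, mul_assoc]
          gcongr
          exacts [ha.1, Finset.prod_nonneg fun j _ => hx.1 _]
      _ ≤ ∑ i, g i x := Finset.single_le_sum (fun j _ => hgnonneg x hx j) (Finset.mem_univ i)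
  calc ∫ x in Icc 0 1 \ Icc 0 (fun _ => δ), (1 - a * ∏ i, x i) ^ k
      ≤ ∫ x in Icc 0 1 \ Icc 0 (fun _ => δ), ∑ i, g i x :=
        setIntegral_mono_on (Continuous.integrableOn_Icc (by fun_prop) |>.mono_set sdiff_subset)
          (hsumint.mono_set sdiff_subset)
          (measurableSet_Icc.diff measurableSet_Icc) hle
    _ ≤ ∫ x in Icc 0 1, ∑ i, g i x :=
        setIntegral_mono_set hsumint
          (ae_restrict_of_forall_mem measurableSet_Icc fun x hx =>
            Finset.sum_nonneg fun i _ => hgnonneg x hx i)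
          sdiff_subset.eventuallyLE
    _ = (m + 1) * prodPowIntegral m k (a * δ) := by
        rw [integral_finsetSum _ fun i _ => hgint i]
        simp [hg]

theorem succ_mul_setIntegral_unitCube_diff_le (m k : ℕ) {a δ : ℝ} (ha0 : 0 < a) (ha1 : a ≤ 1)
    (hδ0 : 0 < δ) (hδ1 : δ ≤ 1) :
    (k + 1) * ∫ x in Icc (0 : Fin (m + 1) → ℝ) 1 \ Icc 0 (fun _ => δ), (1 - a * ∏ i, x i) ^ k ≤
      (m + 1) / (a * δ) * (1 + Real.log (k + 1)) ^ (m - 1) :=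
  calc (k + 1) * ∫ x in Icc (0 : Fin (m + 1) → ℝ) 1 \ Icc 0 (fun _ => δ),
        (1 - a * ∏ i, x i) ^ k
      ≤ (k + 1) * ((m + 1) * prodPowIntegral m k (a * δ)) := by
        gcongr
        exact setIntegral_unitCube_diff_le m k ⟨ha0.le, ha1⟩ ⟨hδ0.le, hδ1⟩
    _ = (m + 1) * ((k + 1) * prodPowIntegral m k (a * δ)) := by ring
    _ ≤ (m + 1) * ((1 + Real.log (k + 1)) ^ (m - 1) / (a * δ)) := by
        gcongr
        exact prodPowIntegral.succ_mul_le m k (mul_pos ha0 hδ0) (mul_le_one₀ ha1 hδ0.le hδ1)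
    _ = (m + 1) / (a * δ) * (1 + Real.log (k + 1)) ^ (m - 1) := by ring

/-- For `0 < δ < 1` and `0 < a ≤ 1`,
`n ∫_{[0,1]^d \ [0,δ]^d} (1 - a x₁⋯x_d)^{n-1} dx = O((log n)^{d-2})`. -/
theorem stmt4 (d : ℕ) (hd : 1 ≤ d) (δ a : ℝ) (hδ0 : 0 < δ) (hδ1 : δ < 1)
    (ha0 : 0 < a) (ha : a ≤ 1) :
    (fun n : ℕ =>
        (n : ℝ) * ∫ x in Set.Icc (0 : Fin d → ℝ) 1 \ Set.Icc 0 (fun _ => δ),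
          (1 - a * ∏ i, x i) ^ (n - 1))
      =O[atTop] (fun n : ℕ => (Real.log n) ^ (d - 2)) := by
  obtain ⟨m, rfl⟩ : ∃ m, d = m + 1 := ⟨d - 1, by omega⟩
  have hbound : (fun n : ℕ => (n : ℝ) * ∫ x in Icc (0 : Fin (m + 1) → ℝ) 1 \ Icc 0 (fun _ => δ),
      (1 - a * ∏ i, x i) ^ (n - 1)) =O[atTop] (fun n : ℕ => (1 + Real.log n) ^ (m - 1)) := by
    refine IsBigO.of_bound ((m + 1) / (a * δ)) ?_
    filter_upwards [eventually_ge_atTop 1] with n hn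
    obtain ⟨k, rfl⟩ : ∃ k, n = k + 1 := ⟨n - 1, by omega⟩
    have hI0 : 0 ≤ ∫ x in Icc (0 : Fin (m + 1) → ℝ) 1 \ Icc 0 (fun _ => δ),
        (1 - a * ∏ i, x i) ^ k :=
      setIntegral_nonneg (measurableSet_Icc.diff measurableSet_Icc) fun x hx =>
        (one_sub_pow_mem_Icc k (mul_prod_mem_Icc ⟨ha0.le, ha⟩ hx.1)).1
    rw [Real.norm_of_nonneg (by positivity), Nat.add_sub_cancel]
    push_cast
    exact (succ_mul_setIntegral_unitCube_diff_le m k ha0 ha hδ0 hδ1.le).trans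
      (mul_le_mul_of_nonneg_left (Real.le_norm_self _) (by positivity))
  have hlog : (fun n : ℕ => 1 + Real.log n) =O[atTop] (fun n : ℕ => Real.log n) :=
    (Real.isLittleO_const_log_atTop.comp_tendsto tendsto_natCast_atTop_atTop).isBigO.add
      (isBigO_refl _ _)
  exact hbound.trans (hlog.pow (m - 1))
end

section
/- Fix x ∈ (0,1)^d and for i = 1,...,d define B_i = {y ∈ [0,1]^d : y_j < x_j for all j ≠ i, and x_i < y_i < 2x_i − (x_i/x_j) y_j for all j ≠ i}. Then, assuming 2x_k ≤ 1 for all k, each B_i has Lebesgue measure |B_i| = (1/d) x_1 x_2 ⋯ x_d. -/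
open MeasureTheory

open MeasureTheory Set

lemma int1 (n : ℕ) : ∫⁻ t in Ioo (0:ℝ) 1, ENNReal.ofReal ((1-t)^n) = ENNReal.ofReal (1/(n+1)) := by
  rw [← ofReal_integral_eq_lintegral_ofReal]
  · congr 1
    rw [← integral_Ioc_eq_integral_Ioo, ← intervalIntegral.integral_of_le zero_le_one]
    have : ∫ t in (0:ℝ)..1, (1-t)^n = ∫ t in (1-(1:ℝ))..(1-0), t^n :=
      intervalIntegral.integral_comp_sub_left (fun t => t^n) 1
    rw [this]
    norm_num [integral_pow]
  · apply (Continuous.integrableOn_Ioc (by continuity)).mono_set Ioo_subset_Ioc_self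
  · filter_upwards [ae_restrict_mem measurableSet_Ioo] with t ht
    have : t ≤ 1 := le_of_lt ht.2
    exact pow_nonneg (by linarith) n

lemma volS (n : ℕ) (hn : 1 ≤ n) (i : Fin (n+1)) :
    volume {w : Fin (n+1) → ℝ | 0 < w i ∧ ∀ j, j ≠ i → 0 ≤ w j ∧ w i + w j < 1} =
      ENNReal.ofReal (1/(n+1)) := by
  classical
  set e := MeasurableEquiv.piFinSuccAbove (fun _ : Fin (n+1) => ℝ) i with he
  set P : Set (ℝ × (Fin n → ℝ)) :=
    {q | 0 < q.1 ∧ ∀ j, 0 ≤ q.2 j ∧ q.1 + q.2 j < 1} with hP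
  have hPm : MeasurableSet P := by
    rw [hP, Set.setOf_and]
    apply MeasurableSet.inter
    · exact measurableSet_lt measurable_const measurable_fst
    · rw [Set.setOf_forall]
      refine MeasurableSet.iInter fun j => ?_
      rw [Set.setOf_and]
      refine MeasurableSet.inter ?_ ?_
      · exact measurableSet_le measurable_const (measurable_snd.eval)
      · exact measurableSet_lt (measurable_fst.add measurable_snd.eval) measurable_const
  have hse : {w : Fin (n+1) → ℝ | 0 < w i ∧ ∀ j, j ≠ i → 0 ≤ w j ∧ w i + w j < 1} = e ⁻¹' P := by
    ext w
    have hew : e w = (w i, fun j => w (i.succAbove j)) := rfl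
    simp only [Set.mem_preimage, hew, hP, Set.mem_setOf_eq]
    refine and_congr Iff.rfl ?_
    constructor
    · intro h j; exact h _ (Fin.succAbove_ne i j)
    · intro h j hj
      obtain ⟨k, rfl⟩ := Fin.exists_succAbove_eq hj
      exact h k
  rw [hse, (volume_preserving_piFinSuccAbove (fun _ : Fin (n+1) => ℝ) i).measure_preimage
    hPm.nullMeasurableSet]
  rw [Measure.volume_eq_prod, Measure.prod_apply hPm]
  have hslice : ∀ t : ℝ,
      volume (Prod.mk t ⁻¹' P) =
        Set.indicator (Ioi (0:ℝ)) (fun t => ENNReal.ofReal (1 - t) ^ n) t := by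
    intro t
    by_cases ht : 0 < t
    · have : Prod.mk t ⁻¹' P = Set.pi Set.univ (fun _ : Fin n => Ico 0 (1-t)) := by
        ext b
        simp only [Set.mem_preimage, hP, Set.mem_setOf_eq, Set.mem_pi, Set.mem_univ, true_implies,
          Set.mem_Ico]
        constructor
        · rintro ⟨-, h⟩ j; exact ⟨(h j).1, by linarith [(h j).2]⟩
        · intro h; exact ⟨ht, fun j => ⟨(h j).1, by linarith [(h j).2]⟩⟩
      rw [this, volume_pi_pi]
      simp [Real.volume_Ico, Finset.prod_const, Set.indicator_of_mem (Set.mem_Ioi.2 ht)]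
    · have : Prod.mk t ⁻¹' P = ∅ := by
        ext b; simp only [Set.mem_preimage, hP, Set.mem_setOf_eq, Set.mem_empty_iff_false,
          iff_false]
        rintro ⟨h, -⟩; exact ht h
      rw [this, measure_empty, Set.indicator_of_notMem (by simpa using ht)]
  simp_rw [hslice]
  rw [lintegral_indicator measurableSet_Ioi]
  have hsplit : Ioi (0:ℝ) = Ioo 0 1 ∪ Ici 1 := by
    ext t; simp only [Set.mem_Ioi, Set.mem_union, Set.mem_Ioo, Set.mem_Ici]
    constructor
    · intro h; rcases lt_or_ge t 1 with h1 | h1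
      · exact Or.inl ⟨h, h1⟩
      · exact Or.inr h1
    · rintro (⟨h, -⟩ | h) <;> linarith
  rw [hsplit, lintegral_union measurableSet_Ici (by
    rw [Set.disjoint_left]; rintro t ⟨-, h1⟩ h2; exact absurd h2 (not_le.2 h1))]
  have h2 : ∫⁻ t in Ici (1:ℝ), ENNReal.ofReal (1 - t) ^ n = 0 := by
    rw [setLIntegral_congr_fun measurableSet_Ici (fun t ht => ?_), lintegral_zero]
    have : ENNReal.ofReal (1 - t) = 0 := by
      simp only [ENNReal.ofReal_eq_zero]; linarith [Set.mem_Ici.1 ht]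
    rw [this, zero_pow (by omega)]
  have h1 : ∫⁻ t in Ioo (0:ℝ) 1, ENNReal.ofReal (1 - t) ^ n =
      ENNReal.ofReal (1/(n+1)) := by
    rw [← int1 n]
    refine setLIntegral_congr_fun measurableSet_Ioo (fun t ht => ?_)
    rw [ENNReal.ofReal_pow (by linarith [ht.2])]
  rw [h1, h2, add_zero]

open Pointwise

/-- The region `B_i = {y ∈ [0,1]^d : ∀ j ≠ i, y_j < x_j, x_i < y_i < 2x_i − (x_i/x_j) y_j}`
(with `2x_k ≤ 1`) has Lebesgue measure `(1/d) x₁⋯x_d`. -/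
theorem stmt10 (d : ℕ) (hd : 2 ≤ d) (x : Fin d → ℝ)
    (hx : ∀ k, 0 < x k) (hx1 : ∀ k, 2 * x k ≤ 1) (i : Fin d) :
    volume {y : Fin d → ℝ | (∀ k, 0 ≤ y k ∧ y k ≤ 1) ∧ x i < y i ∧
        ∀ j, j ≠ i → y j < x j ∧ y i < 2 * x i - x i / x j * y j} =
      ENNReal.ofReal ((1 / d) * ∏ k, x k) := by
  classical
  obtain ⟨n, rfl⟩ : ∃ n, d = n + 1 := ⟨d - 1, by omega⟩
  have hn : 1 ≤ n := by omega
  have hxne : ∀ k, x k ≠ 0 := fun k => (hx k).ne'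
  set S := {w : Fin (n+1) → ℝ | 0 < w i ∧ ∀ j, j ≠ i → 0 ≤ w j ∧ w i + w j < 1} with hS
  set T := Matrix.toLin' (Matrix.diagonal x) with hTdef
  set c : Fin (n+1) → ℝ := Pi.single i (x i) with hc
  have hT : ∀ (w : Fin (n+1) → ℝ) (j : Fin (n+1)), T w j = x j * w j := by
    intro w j
    simp [hTdef, Matrix.toLin'_apply, Matrix.mulVec_diagonal]
  have hBi : {y : Fin (n+1) → ℝ | (∀ k, 0 ≤ y k ∧ y k ≤ 1) ∧ x i < y i ∧
      ∀ j, j ≠ i → y j < x j ∧ y i < 2 * x i - x i / x j * y j} = c +ᵥ (⇑T '' S) := by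
    ext y
    simp only [Set.mem_setOf_eq, Set.mem_vadd_set, Set.mem_image]
    constructor
    · rintro ⟨hbox, hyi, hcond⟩
      set w' : Fin (n+1) → ℝ := fun j => if j = i then (y i - x i)/(x i) else y j / x j with hw'
      have hw'i : w' i = (y i - x i)/x i := by simp [hw']
      have hw'j : ∀ j, j ≠ i → w' j = y j / x j := fun j hj => by simp [hw', hj]
      refine ⟨T w', ⟨w', ⟨?_, ?_⟩, rfl⟩, ?_⟩
      · rw [hw'i]; exact div_pos (by linarith) (hx i)
      · intro j hj
        have hcj := hcond j hj
        rw [hw'i, hw'j j hj]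
        refine ⟨div_nonneg (hbox j).1 (hx j).le, ?_⟩
        rw [div_add_div _ _ (hxne i) (hxne j), div_lt_one (mul_pos (hx i) (hx j))]
        have h3 := hcj.2
        have h4 : x i / x j * y j * x j = x i * y j := by
          rw [div_mul_eq_mul_div, div_mul_cancel₀ _ (hxne j)]
        nlinarith [mul_lt_mul_of_pos_right h3 (hx j)]
      · funext k
        have hk0 : (c +ᵥ T w') k = c k + x k * w' k := by simp [vadd_eq_add, hT]
        rw [hk0]
        rcases eq_or_ne k i with rfl | hk
        · rw [hc, Pi.single_eq_same, hw'i]; field_simp [hxne k]; ring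
        · rw [hc, Pi.single_eq_of_ne hk, hw'j k hk, zero_add]
          field_simp [hxne k]
    · rintro ⟨z, ⟨w, ⟨hwi, hw⟩, rfl⟩, rfl⟩
      obtain ⟨j0, hj0⟩ : ∃ j0 : Fin (n+1), j0 ≠ i := by
        rcases eq_or_ne i 0 with h | h
        · exact ⟨⟨1, by omega⟩, by simp [h, Fin.ext_iff]⟩
        · exact ⟨0, Ne.symm h⟩
      have hwj0 := hw j0 hj0
      have hwi1 : w i < 1 := by linarith [hwj0.1, hwj0.2]
      have hval : ∀ k, (c +ᵥ T w) k = c k + x k * w k := fun k => by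
        simp [hT w k]
      have hvi : (c +ᵥ T w) i = x i + x i * w i := by
        rw [hval i, hc, Pi.single_eq_same]
      have hvj : ∀ j, j ≠ i → (c +ᵥ T w) j = x j * w j := fun j hj => by
        rw [hval j, hc, Pi.single_eq_of_ne hj, zero_add]
      refine ⟨fun k => ?_, ?_, fun j hj => ?_⟩
      · rcases eq_or_ne k i with rfl | hk
        · rw [hvi]
          constructor
          · nlinarith [hx k]
          · nlinarith [hx1 k, hx k]
        · rw [hvj k hk]
          have hwk := hw k hk
          have : w k < 1 := by linarith [hwk.2]
          constructor
          · exact mul_nonneg (hx k).le hwk.1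
          · nlinarith [hx1 k, hx k]
      · rw [hvi]; nlinarith [hx i]
      · have hwj := hw j hj
        have hwj1 : w j < 1 := by linarith [hwj.2]
        rw [hvj j hj, hvi]
        constructor
        · nlinarith [hx j]
        · have h5 : x i / x j * (x j * w j) = x i * w j := by
            rw [div_mul_eq_mul_div, mul_comm (x j) (w j), ← mul_assoc,
              mul_div_cancel_right₀ _ (hxne j)]
          rw [h5]
          nlinarith [hx i, hwj.2]
  rw [hBi, measure_vadd, Measure.addHaar_image_linearMap, hTdef, LinearMap.det_toLin',
    Matrix.det_diagonal, abs_of_pos (Finset.prod_pos (fun k _ => hx k)), hS, volS n hn i]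
  rw [← ENNReal.ofReal_mul (Finset.prod_nonneg (fun k _ => (hx k).le))]
  congr 1
  push_cast
  ring
end

section
/- Let x ∈ (0,1)^d with d ≥ 2, and suppose there exist y with y_1 > x_1, y_j < x_j for j ≥ 2, and y_1 < 2x_1 − (x_1/x_2) y_2, and z with z_2 > x_2, z_j < x_j for j ≠ 2, and z_2 < 2x_2 − (x_2/x_1) z_1. Define ỹ = (y_1, 2x_2 − (x_2/x_1) y_1, x_3, ..., x_d) and z̃ = (2x_1 − (x_1/x_2) z_2, z_2, x_3, ..., x_d). Then y ≤ ỹ and z ≤ z̃ coordinatewise, and there exists α ∈ (0,1) with x = α ỹ + (1−α) z̃; hence x lies in the interior of the convex hull of (y + R_+^d) ∪ (z + R_+^d). -/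
/-!
The points `ỹ` and `z̃` lie on the line through `x` in the plane of the first two coordinates
cut out by `v 0 / x 0 + v 1 / x 1 = 2` (with the other coordinates equal to those of `x`), on
opposite sides of `x`. Since `y` lies strictly below this line, points of the line slightly beyond
`ỹ` towards `x` still dominate `y` strictly in every coordinate, hence are interior points of
`y + ℝ₊^d`; a strict convex combination of such a point with `z̃` gives `x`.
-/

section TwoMulSubDivMul

variable {u v a b : ℝ}

lemma two_mul_sub_div_mul_sub_eq (hu : u ≠ 0) (hv : v ≠ 0) :
    2 * u - u / v * b - a = u / v * (2 * v - v / u * a - b) := by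
  field_simp
  ring

lemma lt_two_mul_sub_div_mul_comm (hu : 0 < u) (hv : 0 < v) :
    a < 2 * u - u / v * b ↔ b < 2 * v - v / u * a := by
  rw [← sub_pos, two_mul_sub_div_mul_sub_eq hu.ne' hv.ne',
    mul_pos_iff_of_pos_left (div_pos hu hv), sub_pos]

lemma le_two_mul_sub_div_mul_comm (hu : 0 < u) (hv : 0 < v) :
    a ≤ 2 * u - u / v * b ↔ b ≤ 2 * v - v / u * a := by
  rw [← sub_nonneg, two_mul_sub_div_mul_sub_eq hu.ne' hv.ne',
    mul_nonneg_iff_of_pos_left (div_pos hu hv), sub_nonneg]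

lemma two_mul_sub_div_mul_two_mul_sub_div_mul (hu : u ≠ 0) (hv : v ≠ 0) :
    2 * v - v / u * (2 * u - u / v * b) = b := by
  field_simp
  ring

lemma two_mul_sub_div_mul_lt_self (hu : 0 < u) (hv : 0 < v) (hb : v < b) :
    2 * u - u / v * b < u := by
  have : u < u / v * b := by
    rw [div_mul_eq_mul_div, lt_div_iff₀ hv]
    exact mul_lt_mul_of_pos_left hb hu
  linarith

end TwoMulSubDivMul

section SupportLine

variable {ι : Type*} [DecidableEq ι] (x : ι → ℝ) (i j : ι)

/-- The line through `x` in the `(i, j)`-plane on which `v i / x i + v j / x j = 2`,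
parametrized by the `i`-th coordinate. -/
noncomputable def supportLine (t : ℝ) : ι → ℝ :=
  fun k => if k = i then t else if k = j then 2 * x j - x j / x i * t else x k

variable {x i j}

lemma supportLine_self (hi : x i ≠ 0) : supportLine x i j (x i) = x := by
  funext k
  unfold supportLine
  split_ifs with hki hkj
  · rw [hki]
  · subst hkj
    field_simp
    ring
  · rfl

lemma supportLine_combo {α β : ℝ} (s t : ℝ) (hαβ : α + β = 1) :
    supportLine x i j (α * s + β * t) = α • supportLine x i j s + β • supportLine x i j t := by
  funext k
  simp only [supportLine, Pi.add_apply, Pi.smul_apply, smul_eq_mul]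
  split_ifs
  · rfl
  · linear_combination (-2 * x j) * hαβ
  · linear_combination -x k * hαβ

lemma exists_eq_combo_supportLine (hi : x i ≠ 0) {s t : ℝ} (hs : s < x i) (ht : x i < t) :
    ∃ α : ℝ, 0 < α ∧ α < 1 ∧ x = α • supportLine x i j t + (1 - α) • supportLine x i j s := by
  have hts : 0 < t - s := by linarith
  refine ⟨(x i - s) / (t - s), div_pos (by linarith) hts, (div_lt_one hts).2 (by linarith), ?_⟩
  rw [← supportLine_combo t s (add_sub_cancel _ _)]
  conv_lhs => rw [← supportLine_self (j := j) hi]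
  congr 1
  field_simp
  ring

lemma supportLine_two_mul_sub (hi : x i ≠ 0) (hj : x j ≠ 0) (t : ℝ) :
    (fun k => if k = i then 2 * x i - x i / x j * t else if k = j then t else x k) =
      supportLine x i j (2 * x i - x i / x j * t) := by
  funext k
  unfold supportLine
  split_ifs
  · rfl
  · exact (two_mul_sub_div_mul_two_mul_sub_div_mul hi hj).symm
  · rfl

variable {y : ι → ℝ} {t : ℝ}

lemma le_supportLine (hi : 0 < x i) (hj : 0 < x j) (hy : ∀ k, k ≠ i → k ≠ j → y k ≤ x k)
    (hyt : y i ≤ t) (ht : t ≤ 2 * x i - x i / x j * y j) : y ≤ supportLine x i j t := by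
  intro k
  unfold supportLine
  split_ifs with hki hkj
  · rwa [hki]
  · rw [hkj]
    exact (le_two_mul_sub_div_mul_comm hi hj).1 ht
  · exact hy k hki hkj

lemma lt_supportLine (hi : 0 < x i) (hj : 0 < x j) (hy : ∀ k, k ≠ i → k ≠ j → y k < x k)
    (hyt : y i < t) (ht : t < 2 * x i - x i / x j * y j) : ∀ k, y k < supportLine x i j t k := by
  intro k
  unfold supportLine
  split_ifs with hki hkj
  · rwa [hki]
  · rw [hkj]
    exact (lt_two_mul_sub_div_mul_comm hi hj).1 ht
  · exact hy k hki hkj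

end SupportLine

lemma mem_interior_Ici_of_forall_lt {ι : Type*} [Finite ι] {y v : ι → ℝ} (h : ∀ k, y k < v k) :
    v ∈ interior (Set.Ici y) := by
  rw [← Set.pi_univ_Ici, interior_pi_set Set.finite_univ]
  simpa only [interior_Ici, Set.mem_univ_pi, Set.mem_Ioi] using h

lemma combo_mem_interior_convexHull_union {E : Type*} [AddCommGroup E] [Module ℝ E]
    [TopologicalSpace E] [IsTopologicalAddGroup E] [ContinuousConstSMul ℝ E] {s t : Set E}
    {a b : E} (ha : a ∈ interior s) (hb : b ∈ t) {α : ℝ} (hα₀ : 0 < α) (hα₁ : α < 1) :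
    α • a + (1 - α) • b ∈ interior (convexHull ℝ (s ∪ t)) :=
  (convex_convexHull ℝ _).combo_interior_self_mem_interior
    (interior_mono (Set.subset_union_left.trans (subset_convexHull ℝ _)) ha)
    (subset_convexHull ℝ _ (Set.mem_union_right s hb)) hα₀ (by linarith) (by ring)

/-- Geometric core of Lemma 3: if `y ∈ B₁` and `z ∈ B₂` (regions dominating `x`),
then with `ỹ = (y₀, 2x₁ − (x₁/x₀)y₀, x₂, …)` and `z̃ = (2x₀ − (x₀/x₁)z₁, z₁, x₂, …)`
we have `y ≤ ỹ`, `z ≤ z̃`, `x` is a strict convex combination of `ỹ` and `z̃`, and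
`x` lies in the interior of the convex hull of `(y + ℝ₊^d) ∪ (z + ℝ₊^d)`. -/
theorem stmt11 (d : ℕ) (x y z : Fin (d + 2) → ℝ)
    (hx : ∀ k, 0 < x k ∧ x k < 1)
    (hy0 : x 0 < y 0) (hyj : ∀ j, j ≠ 0 → y j < x j)
    (hy1 : y 0 < 2 * x 0 - x 0 / x 1 * y 1)
    (hz1 : x 1 < z 1) (hzj : ∀ j, j ≠ 1 → z j < x j)
    (hz0 : z 1 < 2 * x 1 - x 1 / x 0 * z 0) :
    (∀ k, y k ≤ (fun k : Fin (d + 2) =>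
        if k = 0 then y 0 else if k = 1 then 2 * x 1 - x 1 / x 0 * y 0 else x k) k) ∧
    (∀ k, z k ≤ (fun k : Fin (d + 2) =>
        if k = 0 then 2 * x 0 - x 0 / x 1 * z 1 else if k = 1 then z 1 else x k) k) ∧
    (∃ α : ℝ, 0 < α ∧ α < 1 ∧
      x = α • (fun k : Fin (d + 2) =>
          if k = 0 then y 0 else if k = 1 then 2 * x 1 - x 1 / x 0 * y 0 else x k) +
        (1 - α) • (fun k : Fin (d + 2) =>
          if k = 0 then 2 * x 0 - x 0 / x 1 * z 1 else if k = 1 then z 1 else x k)) ∧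
    x ∈ interior (convexHull ℝ
      ({v : Fin (d + 2) → ℝ | ∀ k, y k ≤ v k} ∪ {v : Fin (d + 2) → ℝ | ∀ k, z k ≤ v k})) := by
  have hx0 := (hx 0).1
  have hx1 := (hx 1).1
  rw [supportLine_two_mul_sub hx0.ne' hx1.ne']
  have hz0' := (lt_two_mul_sub_div_mul_comm hx1 hx0).1 hz0
  have hzx : 2 * x 0 - x 0 / x 1 * z 1 < x 0 := two_mul_sub_div_mul_lt_self hx0 hx1 hz1
  have hyy : y ≤ supportLine x 0 1 (y 0) :=
    le_supportLine hx0 hx1 (fun k hk _ => (hyj k hk).le) le_rfl hy1.le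
  have hzz : z ≤ supportLine x 0 1 (2 * x 0 - x 0 / x 1 * z 1) :=
    le_supportLine hx0 hx1 (fun k _ hk => (hzj k hk).le) hz0'.le le_rfl
  refine ⟨hyy, hzz, exists_eq_combo_supportLine hx0.ne' hzx hy0, ?_⟩
  obtain ⟨t, hyt, ht⟩ := exists_between hy1
  obtain ⟨α, hα₀, hα₁, hxα⟩ := exists_eq_combo_supportLine hx0.ne' hzx (hy0.trans hyt)
  rw [hxα]
  exact combo_mem_interior_convexHull_union
    (mem_interior_Ici_of_forall_lt (lt_supportLine hx0 hx1 (fun k hk _ => hyj k hk) hyt ht))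
    hzz hα₀ hα₁
end

section
/- Let S be a finite subset of R^d, F its Pareto front (points not strictly dominated by any other point of S), and G = ∪_{x ∈ F} (x + R_+^d). A point x ∈ F is a minimizer over S of some linear functional y ↦ Σ_i α_i y_i with α ∈ R_+^d, α ≠ 0, if and only if x lies on the boundary of the convex hull of G. -/
open scoped Classical

lemma clm_apply_eq_sum (d : ℕ) (f : (Fin d → ℝ) →L[ℝ] ℝ) (v : Fin d → ℝ) :
    f v = ∑ i, v i * f (Pi.single i 1) := by
  have hv : v = ∑ i, v i • (Pi.single i 1 : Fin d → ℝ) := by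
    ext j
    simp [Finset.sum_apply, Pi.single_apply]
  calc f v = f (∑ i, v i • (Pi.single i 1 : Fin d → ℝ)) := by rw [← hv]
    _ = ∑ i, v i * f (Pi.single i 1) := by
        rw [map_sum]; simp [smul_eq_mul]

/-- A Pareto-optimal point `x` of a finite set `S` is a minimizer of some nonzero
non-negative linear scalarization iff it lies on the boundary of the convex hull of
`G = ⋃_{x ∈ F} (x + ℝ₊^d)`, where `F` is the Pareto front of `S`. -/
theorem stmt13 (d : ℕ) (S : Finset (Fin d → ℝ)) (hS : S.Nonempty)
    (F : Finset (Fin d → ℝ))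
    (hF : F = S.filter fun x => ¬ ∃ y ∈ S, (∀ i, y i ≤ x i) ∧ y ≠ x)
    (G : Set (Fin d → ℝ))
    (hG : G = ⋃ x ∈ F, {v : Fin d → ℝ | ∀ i, x i ≤ v i})
    (x : Fin d → ℝ) (hx : x ∈ F) :
    (∃ α : Fin d → ℝ, (∀ i, 0 ≤ α i) ∧ α ≠ 0 ∧
        ∀ y ∈ S, ∑ i, α i * x i ≤ ∑ i, α i * y i) ↔
      x ∈ frontier (convexHull ℝ G) := by
  have hFS : F ⊆ S := by rw [hF]; exact Finset.filter_subset _ _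
  have hxS : x ∈ S := hFS hx
  have hmemG : ∀ z ∈ F, ∀ v : Fin d → ℝ, (∀ i, z i ≤ v i) → v ∈ G := by
    intro z hz v hv
    rw [hG]
    exact Set.mem_biUnion hz hv
  have hxG : x ∈ G := hmemG x hx x (fun i => le_refl _)
  -- every point of S is dominated by a Pareto point
  have hdom : ∀ y ∈ S, ∃ z ∈ F, ∀ i, z i ≤ y i := by
    intro y hy
    obtain ⟨z, hz, hzmin⟩ := Finset.exists_min_image
      (S.filter fun z => ∀ i, z i ≤ y i) (fun z => ∑ i, z i)
      ⟨y, by simp [hy]⟩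
    simp only [Finset.mem_filter] at hz
    refine ⟨z, ?_, hz.2⟩
    rw [hF, Finset.mem_filter]
    refine ⟨hz.1, ?_⟩
    rintro ⟨w, hwS, hwle, hwne⟩
    have hw : w ∈ S.filter fun z => ∀ i, z i ≤ y i :=
      Finset.mem_filter.2 ⟨hwS, fun i => (hwle i).trans (hz.2 i)⟩
    have h1 : ∑ i, z i ≤ ∑ i, w i := hzmin w hw
    have h2 : ∑ i, w i < ∑ i, z i := by
      have hex : ∃ i, w i < z i := by
        by_contra hc
        push_neg at hc
        exact hwne (funext fun i => le_antisymm (hwle i) (hc i))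
      obtain ⟨j, hj⟩ := hex
      exact Finset.sum_lt_sum (fun i _ => hwle i) ⟨j, Finset.mem_univ j, hj⟩
    linarith
  have hSG : ∀ y ∈ S, y ∈ G := by
    intro y hy
    obtain ⟨z, hzF, hzle⟩ := hdom y hy
    exact hmemG z hzF y hzle
  constructor
  · -- minimizer ⇒ frontier
    rintro ⟨α, hα0, hαne, hαmin⟩
    have hlin : IsLinearMap ℝ (fun v : Fin d → ℝ => ∑ i, α i * v i) := by
      constructor
      · intro u v; simp [mul_add, Finset.sum_add_distrib]
      · intro c v
        simp only [Pi.smul_apply, smul_eq_mul, Finset.mul_sum]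
        exact Finset.sum_congr rfl fun i _ => by ring
    have hH : convexHull ℝ G ⊆ {v : Fin d → ℝ | ∑ i, α i * x i ≤ ∑ i, α i * v i} := by
      apply convexHull_min _ (convex_halfSpace_ge hlin _)
      intro v hv
      rw [hG] at hv
      simp only [Set.mem_iUnion, Set.mem_setOf_eq, exists_prop] at hv
      obtain ⟨z, hzF, hzv⟩ := hv
      have h1 : ∑ i, α i * x i ≤ ∑ i, α i * z i := hαmin z (hFS hzF)
      have h2 : ∑ i, α i * z i ≤ ∑ i, α i * v i :=
        Finset.sum_le_sum fun i _ => mul_le_mul_of_nonneg_left (hzv i) (hα0 i)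
      exact le_trans h1 h2
    obtain ⟨i₀, hi₀⟩ : ∃ i, α i ≠ 0 := by
      by_contra hc; push_neg at hc; exact hαne (funext hc)
    have hi₀pos : 0 < α i₀ := lt_of_le_of_ne (hα0 i₀) (Ne.symm hi₀)
    constructor
    · exact subset_closure (subset_convexHull ℝ G hxG)
    · intro hint
      obtain ⟨ε, hε, hball⟩ := Metric.isOpen_iff.mp isOpen_interior x hint
      set v : Fin d → ℝ := fun j => if j = i₀ then x j - ε / 2 else x j with hvdef
      have hvball : v ∈ Metric.ball x ε := by
        rw [Metric.mem_ball]
        have hd : dist v x ≤ ε / 2 := by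
          rw [dist_pi_le_iff (by linarith)]
          intro b
          rw [Real.dist_eq, hvdef]
          by_cases hb : b = i₀ <;>
            simp [hb, abs_of_nonneg (le_of_lt (half_pos hε)), le_of_lt (half_pos hε)]
        linarith
      have hvC : v ∈ convexHull ℝ G := interior_subset (hball hvball)
      have hle := hH hvC
      simp only [Set.mem_setOf_eq] at hle
      have hsum : ∑ i, α i * v i = (∑ i, α i * x i) - (ε / 2) * α i₀ := by
        have : ∀ i ∈ Finset.univ, α i * v i
            = α i * x i - (if i = i₀ then (ε / 2) * α i₀ else 0) := by
          intro i _
          rw [hvdef]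
          by_cases hi : i = i₀ <;> simp [hi] <;> ring
        rw [Finset.sum_congr rfl this, Finset.sum_sub_distrib, Finset.sum_ite_eq'
          Finset.univ i₀ (fun _ => (ε / 2) * α i₀)]
        simp
      nlinarith
  · -- frontier ⇒ minimizer
    intro hxf
    set C := convexHull ℝ G with hC
    have hCconv : Convex ℝ C := convex_convexHull ℝ G
    -- interior of C is nonempty
    have hballG : Metric.ball (x + 2) 1 ⊆ G := by
      intro v hv
      refine hmemG x hx v (fun i => ?_)
      have hh := (dist_pi_lt_iff one_pos).mp (Metric.mem_ball.mp hv) i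
      rw [Real.dist_eq, abs_lt] at hh
      have h2 : (x + 2 : Fin d → ℝ) i = x i + 2 := rfl
      rw [h2] at hh
      linarith [hh.1]
    have hxa : (x + 2 : Fin d → ℝ) ∈ interior C := by
      apply interior_maximal (le_trans hballG (subset_convexHull ℝ G)) Metric.isOpen_ball
      exact Metric.mem_ball_self one_pos
    have hxni : x ∉ interior C := hxf.2
    obtain ⟨f, hf⟩ := geometric_hahn_banach_open_point
      (hCconv.interior) isOpen_interior hxni
    -- f ≤ f x on all of C
    have hfC : ∀ v ∈ C, f v ≤ f x := by
      intro v hv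
      by_contra hcon
      push_neg at hcon
      set a : Fin d → ℝ := x + 2 with ha
      set D : ℝ := f v - f a with hD
      have hkey : ∀ t : ℝ, 0 < t → t ≤ 1 → t * f a + (1 - t) * f v < f x := by
        intro t ht ht1
        have hw : t • a + (1 - t) • v ∈ interior C :=
          hCconv.combo_interior_self_mem_interior hxa hv ht (by linarith) (by ring)
        have := hf _ hw
        simpa [smul_eq_mul] using this
      rcases le_or_gt D 0 with hD0 | hD0
      · have h2 := hkey (1/2) (by norm_num) (by norm_num)
        nlinarith
      · set t : ℝ := min 1 ((f v - f x) / (2 * D)) with ht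
        have htpos : 0 < t := lt_min one_pos (div_pos (by linarith) (by linarith))
        have ht1 : t ≤ 1 := min_le_left _ _
        have htD : t * D ≤ (f v - f x) / 2 := by
          have hle : t ≤ (f v - f x) / (2 * D) := min_le_right _ _
          calc t * D ≤ ((f v - f x) / (2 * D)) * D :=
                mul_le_mul_of_nonneg_right hle (le_of_lt hD0)
            _ = (f v - f x) / 2 := by field_simp
        have hk := hkey t htpos ht1
        have hexp : t * f a + (1 - t) * f v = f v - t * D := by rw [hD]; ring
        rw [hexp] at hk
        linarith
    -- coefficients
    set α : Fin d → ℝ := fun i => -f (Pi.single i 1) with hα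
    have hα0 : ∀ i, 0 ≤ α i := by
      intro i
      have hmem : (x + Pi.single i 1 : Fin d → ℝ) ∈ G := by
        refine hmemG x hx _ (fun j => ?_)
        have h1 : (0:ℝ) ≤ (Pi.single i 1 : Fin d → ℝ) j := by
          rcases eq_or_ne i j with h | h <;> simp [Pi.single_apply, h]
        have h2 : (x + Pi.single i 1 : Fin d → ℝ) j = x j + (Pi.single i 1 : Fin d → ℝ) j := rfl
        rw [h2]; linarith
      have hle := hfC _ (subset_convexHull ℝ G hmem)
      rw [map_add] at hle
      simp only [hα, neg_nonneg]
      linarith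
    have hfrep : ∀ v : Fin d → ℝ, f v = -∑ i, α i * v i := by
      intro v
      rw [clm_apply_eq_sum d f v, ← Finset.sum_neg_distrib]
      exact Finset.sum_congr rfl fun i _ => by simp [hα]; ring
    have hαne : α ≠ 0 := by
      intro h0
      have hfz : f (x + 2) = 0 := by rw [hfrep, h0]; simp
      have hfx : f x = 0 := by rw [hfrep, h0]; simp
      have hlt := hf _ hxa
      rw [hfz, hfx] at hlt
      exact lt_irrefl 0 hlt
    refine ⟨α, hα0, hαne, fun y hy => ?_⟩
    have hfy : f y ≤ f x := hfC y (subset_convexHull ℝ G (hSG y hy))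
    rw [hfrep, hfrep] at hfy
    linarith
end
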